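/- arXiv:2412.17166 — 7 statements merged into one kernel-verified Lean document; each statement's English description precedes it below -/
import Mathlib

section
/- Let P, Q be continuous on [0,1] with P(x) ≥ α > 0, and suppose there exists a uniformly bounded C¹ solution w on [0,1] of the Riccati equation w' = w²/P - Q. Then there exists γ > 0 such that for all h in H¹₀(0,1), Γ(h) = ∫₀¹ P h'² + Q h² dx ≥ γ ∫₀¹ h'(x)² + h(x)² dx. -/
open Set MeasureTheory

lemma swap_core {c : ℝ} {a b : ℝ → ℝ} (ha : IntegrableOn a (Ioc 0 c))
    (hb : IntegrableOn b (Ioc 0 c)) :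
    ∫ x in Ioc (0:ℝ) c, a x * ∫ t in Ioc (0:ℝ) x, b t
      = ∫ t in Ioc (0:ℝ) c, b t * ∫ x in Ioc t c, a x := by
  have hS : MeasurableSet {p : ℝ × ℝ | p.2 ≤ p.1} :=
    measurableSet_le measurable_snd measurable_fst
  set μ := volume.restrict (Ioc (0:ℝ) c) with hμ
  have hprod : Integrable (fun p : ℝ × ℝ => a p.1 * b p.2) (μ.prod μ) := ha.mul_prod hb
  have hF : Integrable ({p : ℝ × ℝ | p.2 ≤ p.1}.indicator (fun p : ℝ × ℝ => a p.1 * b p.2))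
      (μ.prod μ) := hprod.indicator hS
  have swap := MeasureTheory.integral_integral_swap
    (f := fun x t => {p : ℝ × ℝ | p.2 ≤ p.1}.indicator (fun p : ℝ × ℝ => a p.1 * b p.2) (x, t))
    (μ := μ) (ν := μ) hF
  have L : ∫ x, (∫ t, {p : ℝ × ℝ | p.2 ≤ p.1}.indicator
      (fun p : ℝ × ℝ => a p.1 * b p.2) (x, t) ∂μ) ∂μ
      = ∫ x in Ioc (0:ℝ) c, a x * ∫ t in Ioc (0:ℝ) x, b t := by
    rw [hμ]
    apply setIntegral_congr_fun measurableSet_Ioc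
    intro x hx
    show (∫ t in Ioc (0:ℝ) c, {p : ℝ × ℝ | p.2 ≤ p.1}.indicator
        (fun p : ℝ × ℝ => a p.1 * b p.2) (x, t)) = a x * ∫ t in Ioc (0:ℝ) x, b t
    have e1 : (fun t => {p : ℝ × ℝ | p.2 ≤ p.1}.indicator
        (fun p : ℝ × ℝ => a p.1 * b p.2) (x, t))
        = (Iic x).indicator (fun t => a x * b t) := by
      funext t
      by_cases h : t ≤ x <;>
        simp [Set.indicator_apply, h, Set.mem_setOf_eq]
    rw [e1, integral_indicator measurableSet_Iic,
      Measure.restrict_restrict measurableSet_Iic]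
    have e2 : Iic x ∩ Ioc 0 c = Ioc 0 x := by
      ext t
      simp only [mem_inter_iff, mem_Iic, mem_Ioc]
      constructor
      · rintro ⟨h1, h2, _⟩; exact ⟨h2, h1⟩
      · rintro ⟨h1, h2⟩; exact ⟨h2, h1, h2.trans hx.2⟩
    rw [e2, integral_const_mul]
  have R : ∫ t, (∫ x, {p : ℝ × ℝ | p.2 ≤ p.1}.indicator
      (fun p : ℝ × ℝ => a p.1 * b p.2) (x, t) ∂μ) ∂μ
      = ∫ t in Ioc (0:ℝ) c, b t * ∫ x in Ioc t c, a x := by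
    rw [hμ]
    apply setIntegral_congr_fun measurableSet_Ioc
    intro t ht
    show (∫ x in Ioc (0:ℝ) c, {p : ℝ × ℝ | p.2 ≤ p.1}.indicator
        (fun p : ℝ × ℝ => a p.1 * b p.2) (x, t)) = b t * ∫ x in Ioc t c, a x
    have e1 : (fun x => {p : ℝ × ℝ | p.2 ≤ p.1}.indicator
        (fun p : ℝ × ℝ => a p.1 * b p.2) (x, t))
        = (Ici t).indicator (fun x => a x * b t) := by
      funext x
      by_cases h : t ≤ x <;>
        simp [Set.indicator_apply, h, Set.mem_setOf_eq]
    rw [e1, integral_indicator measurableSet_Ici,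
      Measure.restrict_restrict measurableSet_Ici]
    have e2 : Ici t ∩ Ioc 0 c = Icc t c := by
      ext x
      simp only [mem_inter_iff, mem_Ici, mem_Ioc, mem_Icc]
      constructor
      · rintro ⟨h1, _, h3⟩; exact ⟨h1, h3⟩
      · rintro ⟨h1, h2⟩; exact ⟨h1, ht.1.trans_le h1, h2⟩
    rw [e2, integral_Icc_eq_integral_Ioc, integral_mul_const, mul_comm]
  rw [← L, ← R]
  exact swap


set_option maxHeartbeats 1000000 in
/-- (C2) ⟹ (C3): if the Riccati equation `w' = w²/P - Q` has a uniformly bounded C¹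
solution on `[0,1]`, then the quadratic form `Γ` is coercive over `H¹₀(0,1)`
(absolutely continuous functions with square-integrable derivative, vanishing at the
endpoints, modeled via `h x = ∫₀ˣ h'`). -/
theorem coercive_of_riccati
    (α : ℝ) (hα : 0 < α) (P Q w w' : ℝ → ℝ)
    (hP : ContinuousOn P (Icc 0 1))
    (hPα : ∀ x ∈ Icc (0:ℝ) 1, α ≤ P x)
    (hQ : ContinuousOn Q (Icc 0 1))
    (hw : ∀ x ∈ Icc (0:ℝ) 1, HasDerivAt w (w' x) x)
    (hw'c : ContinuousOn w' (Icc 0 1))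
    (hric : ∀ x ∈ Icc (0:ℝ) 1, w' x = (w x) ^ 2 / P x - Q x)
    (hwbd : ∃ M : ℝ, ∀ x ∈ Icc (0:ℝ) 1, |w x| ≤ M) :
    ∃ γ > (0:ℝ), ∀ h h' : ℝ → ℝ,
      IntervalIntegrable h' volume 0 1 →
      IntervalIntegrable (fun x => h' x ^ 2) volume 0 1 →
      (∀ x ∈ Icc (0:ℝ) 1, h x = ∫ t in (0:ℝ)..x, h' t) →
      h 1 = 0 →
      (∫ x in (0:ℝ)..1, (P x * h' x ^ 2 + Q x * h x ^ 2))
        ≥ γ * ∫ x in (0:ℝ)..1, (h' x ^ 2 + h x ^ 2) := by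
  obtain ⟨M, hM⟩ := hwbd
  have h01 : (0:ℝ) ≤ 1 := zero_le_one
  have hucc : uIcc (0:ℝ) 1 = Icc 0 1 := uIcc_of_le h01
  have hM0 : 0 ≤ M := le_trans (abs_nonneg _) (hM 0 ⟨le_rfl, h01⟩)
  set K : ℝ := M / α + 1 with hKdef
  have hK0 : 0 < K := by positivity
  set C : ℝ := 2 + (2*K^2+1) * Real.exp (2*K) with hCdef
  have hC0 : 0 < C := by positivity
  refine ⟨α / C, by positivity, ?_⟩
  intro h h' hInt hInt2 hprim h1
  have hPpos : ∀ x ∈ Icc (0:ℝ) 1, 0 < P x := fun x hx => lt_of_lt_of_le hα (hPα x hx)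
  have hwc : ContinuousOn w (Icc 0 1) := fun x hx =>
    (hw x hx).continuousAt.continuousWithinAt
  have hr : ContinuousOn (fun x => w x / P x) (Icc 0 1) :=
    hwc.div hP (fun x hx => (hPpos x hx).ne')
  have hrK : ∀ x ∈ Icc (0:ℝ) 1, |w x / P x| ≤ K := by
    intro x hx
    rw [abs_div, abs_of_pos (hPpos x hx)]
    have h1' : |w x| / P x ≤ M / α :=
      div_le_div₀ hM0 (hM x hx) hα (hPα x hx)
    rw [hKdef]; linarith
  -- integrability conversions
  have toIoc : ∀ {f : ℝ → ℝ}, IntervalIntegrable f volume 0 1 → IntegrableOn f (Ioc 0 1) :=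
    fun hf => (intervalIntegrable_iff_integrableOn_Ioc_of_le h01).1 hf
  have contInt : ∀ {f : ℝ → ℝ}, ContinuousOn f (Icc 0 1) →
      IntervalIntegrable f volume 0 1 := fun hc =>
    ContinuousOn.intervalIntegrable (by rwa [hucc])
  have hInt' : IntegrableOn h' (Ioc 0 1) := toIoc hInt
  have hprim' : ∀ x ∈ Icc (0:ℝ) 1, h x = ∫ t in Ioc 0 x, h' t := fun x hx => by
    rw [hprim x hx, intervalIntegral.integral_of_le hx.1]
  have hcont : ContinuousOn h (Icc 0 1) := by
    have hi : IntegrableOn h' (Icc 0 1) := (integrableOn_Icc_iff_integrableOn_Ioc).2 hInt'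
    exact (intervalIntegral.continuousOn_primitive hi).congr hprim'
  -- the function g
  set g : ℝ → ℝ := fun x => h' x + w x / P x * h x with hgdef
  have hgx : ∀ x, g x = h' x + w x / P x * h x := fun x => rfl
  have hrh_cont : ContinuousOn (fun x => w x / P x * h x) (Icc 0 1) := hr.mul hcont
  have hg_int : IntervalIntegrable g volume 0 1 := hInt.add (contInt hrh_cont)
  have hg2_int : IntervalIntegrable (fun x => g x ^ 2) volume 0 1 := by
    have e : (fun x => g x ^ 2) = fun x =>
        (h' x ^ 2 + (2 * (w x / P x * h x)) * h' x) + (w x / P x * h x) ^ 2 := by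
      funext x; rw [hgx]; ring
    have c1 : ContinuousOn (fun x => 2 * (w x / P x * h x)) (uIcc 0 1) := by
      rw [hucc]; exact continuousOn_const.mul hrh_cont
    rw [e]
    exact (hInt2.add (hInt.continuousOn_mul c1)).add (contInt (hrh_cont.pow 2))
  -- pointwise algebraic identity
  have E1 : ∀ x ∈ Icc (0:ℝ) 1, P x * g x ^ 2 =
      (P x * h' x ^ 2 + Q x * h x ^ 2) + (w' x * h x ^ 2 + 2 * w x * h x * h' x) := by
    intro x hx
    have hP0 : P x ≠ 0 := (hPpos x hx).ne'
    have hq : w x ^ 2 / P x = w' x + Q x := by rw [hric x hx]; ring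
    have expand : P x * g x ^ 2 =
        P x * h' x ^ 2 + 2 * w x * h x * h' x + w x ^ 2 / P x * h x ^ 2 := by
      rw [hgx]; field_simp; ring
    rw [expand, hq]; ring
  -- integrabilities on [0,1]
  have hcontu : ContinuousOn h (uIcc 0 1) := by rwa [hucc]
  have iQh2 : IntervalIntegrable (fun x => Q x * h x ^ 2) volume 0 1 :=
    contInt (hQ.mul (hcont.pow 2))
  have iPh'2 : IntervalIntegrable (fun x => P x * h' x ^ 2) volume 0 1 :=
    hInt2.continuousOn_mul (by rwa [hucc])
  have iGam : IntervalIntegrable (fun x => P x * h' x ^ 2 + Q x * h x ^ 2) volume 0 1 :=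
    iPh'2.add iQh2
  have iw'h2 : IntervalIntegrable (fun x => w' x * h x ^ 2) volume 0 1 :=
    contInt (hw'c.mul (hcont.pow 2))
  have iwhh' : IntervalIntegrable (fun x => 2 * w x * h x * h' x) volume 0 1 := by
    have c1 : ContinuousOn (fun x => 2 * w x * h x) (uIcc 0 1) := by
      rw [hucc]; exact (continuousOn_const.mul hwc).mul hcont
    exact hInt.continuousOn_mul c1
  have iD : IntervalIntegrable (fun x => w' x * h x ^ 2 + 2 * w x * h x * h' x) volume 0 1 :=
    iw'h2.add iwhh'
  have iPg2 : IntervalIntegrable (fun x => P x * g x ^ 2) volume 0 1 :=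
    hg2_int.continuousOn_mul (by rwa [hucc])
  have iu1 : IntegrableOn (fun t => h' t * h t) (Ioc 0 1) :=
    toIoc (hInt.mul_continuousOn hcontu)
  -- Claim A: h x ^ 2 = 2 ∫_{Ioc 0 x} h' h
  have claimA : ∀ x ∈ Icc (0:ℝ) 1, h x ^ 2 = 2 * ∫ t in Ioc (0:ℝ) x, h' t * h t := by
    intro x hx
    have hax : IntegrableOn h' (Ioc 0 x) := hInt'.mono_set (Ioc_subset_Ioc le_rfl hx.2)
    have hswap := swap_core (c := x) hax hax
    have L1 : ∫ s in Ioc (0:ℝ) x, h' s * ∫ t in Ioc (0:ℝ) s, h' t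
        = ∫ s in Ioc (0:ℝ) x, h' s * h s :=
      setIntegral_congr_fun measurableSet_Ioc (fun s hs => by
        rw [← hprim' s ⟨hs.1.le, hs.2.trans hx.2⟩])
    have R1 : ∫ t in Ioc (0:ℝ) x, h' t * ∫ s in Ioc t x, h' s
        = ∫ t in Ioc (0:ℝ) x, (h x * h' t - h' t * h t) :=
      setIntegral_congr_fun measurableSet_Ioc (fun t ht => by
        have hi0x : IntervalIntegrable h' volume 0 x :=
          hInt.mono_set (by rw [hucc, uIcc_of_le hx.1]; exact Icc_subset_Icc le_rfl hx.2)
        have hsub : uIcc 0 t ⊆ uIcc (0:ℝ) 1 := by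
          rw [hucc, uIcc_of_le ht.1.le]
          exact Icc_subset_Icc le_rfl (ht.2.trans hx.2)
        have hi0t : IntervalIntegrable h' volume 0 t := hInt.mono_set hsub
        have e : ∫ s in Ioc t x, h' s = h x - h t := by
          rw [← intervalIntegral.integral_of_le ht.2,
            ← intervalIntegral.integral_interval_sub_left hi0x hi0t,
            ← hprim x hx, ← hprim t ⟨ht.1.le, ht.2.trans hx.2⟩]
        rw [e]; ring)
    have hhax : IntegrableOn (fun t => h' t * h t) (Ioc 0 x) :=
      iu1.mono_set (Ioc_subset_Ioc le_rfl hx.2)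
    have R2 : ∫ t in Ioc (0:ℝ) x, (h x * h' t - h' t * h t)
        = h x * h x - ∫ t in Ioc (0:ℝ) x, h' t * h t := by
      rw [integral_sub (hax.const_mul (h x)) hhax, integral_const_mul, ← hprim' x hx]
    have := L1.symm.trans (hswap.trans (R1.trans R2))
    nlinarith [this]
  -- Claim B
  have hw'int : IntegrableOn w' (Ioc 0 1) := toIoc (contInt hw'c)
  have hu0 : ∫ t in Ioc (0:ℝ) 1, h' t * h t = 0 := by
    have := claimA 1 ⟨h01, le_rfl⟩
    rw [h1] at this; nlinarith [this]
  have claimB : ∫ t in Ioc (0:ℝ) 1, (w' t * h t ^ 2 + 2 * w t * h t * h' t) = 0 := by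
    have iu1w : IntegrableOn (fun t => h' t * h t * w t) (Ioc 0 1) := by
      have c1 : ContinuousOn (fun t => h t * w t) (uIcc 0 1) := by
        rw [hucc]; exact hcont.mul hwc
      have i1 := toIoc (hInt.mul_continuousOn c1)
      exact i1.congr_fun (fun t _ => by ring) measurableSet_Ioc
    have step1 : ∫ t in Ioc (0:ℝ) 1, w' t * h t ^ 2
        = 2 * ∫ t in Ioc (0:ℝ) 1, w' t * ∫ s in Ioc (0:ℝ) t, h' s * h s := by
      rw [← MeasureTheory.integral_const_mul]
      apply setIntegral_congr_fun measurableSet_Ioc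
      intro t ht
      show w' t * h t ^ 2 = 2 * (w' t * ∫ s in Ioc (0:ℝ) t, h' s * h s)
      rw [claimA t ⟨ht.1.le, ht.2⟩]; ring
    have step2 := swap_core (c := 1) hw'int iu1
    have step3 : ∫ t in Ioc (0:ℝ) 1, (h' t * h t) * ∫ x in Ioc t 1, w' x
        = ∫ t in Ioc (0:ℝ) 1, (w 1 * (h' t * h t) - h' t * h t * w t) := by
      apply setIntegral_congr_fun measurableSet_Ioc
      intro t ht
      show (h' t * h t) * (∫ x in Ioc t 1, w' x) = w 1 * (h' t * h t) - h' t * h t * w t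
      have e : ∫ x in Ioc t 1, w' x = w 1 - w t := by
        rw [← intervalIntegral.integral_of_le ht.2]
        apply intervalIntegral.integral_eq_sub_of_hasDerivAt
        · intro x hx
          rw [uIcc_of_le ht.2] at hx
          exact hw x ⟨ht.1.le.trans hx.1, hx.2⟩
        · apply ContinuousOn.intervalIntegrable
          apply hw'c.mono
          rw [uIcc_of_le ht.2]
          exact Icc_subset_Icc ht.1.le le_rfl
      rw [e]; ring
    have step4 : ∫ t in Ioc (0:ℝ) 1, (w 1 * (h' t * h t) - h' t * h t * w t)
        = w 1 * (∫ t in Ioc (0:ℝ) 1, h' t * h t) - ∫ t in Ioc (0:ℝ) 1, h' t * h t * w t := by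
      rw [integral_sub (iu1.const_mul (w 1)) iu1w, integral_const_mul]
    have ew'h2 : ∫ t in Ioc (0:ℝ) 1, w' t * h t ^ 2
        = - 2 * ∫ t in Ioc (0:ℝ) 1, h' t * h t * w t := by
      rw [step1, step2, step3.trans step4, hu0]; ring
    have e2whh' : ∫ t in Ioc (0:ℝ) 1, 2 * w t * h t * h' t
        = 2 * ∫ t in Ioc (0:ℝ) 1, h' t * h t * w t := by
      rw [← MeasureTheory.integral_const_mul]
      exact setIntegral_congr_fun measurableSet_Ioc (fun t _ => by ring)
    rw [integral_add (toIoc iw'h2) (toIoc iwhh'), ew'h2, e2whh']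
    ring
  -- the key identity
  have key : ∫ x in (0:ℝ)..1, (P x * h' x ^ 2 + Q x * h x ^ 2)
      = ∫ x in (0:ℝ)..1, P x * g x ^ 2 := by
    have e : ∫ x in (0:ℝ)..1, P x * g x ^ 2
        = ∫ x in (0:ℝ)..1, ((P x * h' x ^ 2 + Q x * h x ^ 2)
            + (w' x * h x ^ 2 + 2 * w x * h x * h' x)) := by
      apply intervalIntegral.integral_congr
      intro x hx
      rw [hucc] at hx
      exact E1 x hx
    have claimB' : ∫ x in (0:ℝ)..1, (w' x * h x ^ 2 + 2 * w x * h x * h' x) = 0 := by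
      rw [intervalIntegral.integral_of_le h01]; exact claimB
    rw [e, intervalIntegral.integral_add iGam iD, claimB', add_zero]
  -- quantities
  set B : ℝ := ∫ x in (0:ℝ)..1, g x ^ 2 with hBdef
  have hB0 : 0 ≤ B := intervalIntegral.integral_nonneg h01 (fun u _ => sq_nonneg _)
  set A : ℝ := ∫ t in Ioc (0:ℝ) 1, |g t| with hAdef
  have hgI : IntegrableOn g (Ioc 0 1) := toIoc hg_int
  have hgabs : IntegrableOn (fun t => |g t|) (Ioc 0 1) := hgI.abs
  have hg2I : IntegrableOn (fun t => g t ^ 2) (Ioc 0 1) := toIoc hg2_int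
  have hA0 : 0 ≤ A := setIntegral_nonneg measurableSet_Ioc (fun t _ => abs_nonneg _)
  have hvol : (volume (Ioc (0:ℝ) 1)).toReal = 1 := by
    rw [Real.volume_Ioc]
    norm_num
  have hA2B : A ^ 2 ≤ B := by
    have e : ∫ t in Ioc (0:ℝ) 1, (|g t| - A) ^ 2 = B - A ^ 2 := by
      have e1 : ∀ t ∈ Ioc (0:ℝ) 1, (|g t| - A) ^ 2 = g t ^ 2 - 2 * A * |g t| + A ^ 2 := by
        intro t _; rw [sub_sq, sq_abs]; ring
      have i_a : IntegrableOn (fun t => g t ^ 2 - 2 * A * |g t|) (Ioc (0:ℝ) 1) :=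
        hg2I.sub (hgabs.const_mul (2*A))
      have i_c : IntegrableOn (fun _ : ℝ => A ^ 2) (Ioc (0:ℝ) 1) :=
        integrableOn_const (by simp) (by simp)
      rw [setIntegral_congr_fun measurableSet_Ioc e1,
        integral_add i_a i_c,
        integral_sub hg2I (hgabs.const_mul (2*A)), integral_const_mul,
        setIntegral_const, measureReal_def, hvol, hBdef, intervalIntegral.integral_of_le h01]
      simp only [smul_eq_mul]
      ring
    have hnn : (0:ℝ) ≤ ∫ t in Ioc (0:ℝ) 1, (|g t| - A) ^ 2 :=
      setIntegral_nonneg measurableSet_Ioc (fun t _ => sq_nonneg (|g t| - A))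
    rw [e] at hnn; linarith
  -- pointwise bound on h'
  have hh'bd : ∀ t ∈ Icc (0:ℝ) 1, |h' t| ≤ |g t| + K * |h t| := by
    intro t ht
    have e : h' t = g t - w t / P t * h t := by rw [hgx]; ring
    rw [e]
    calc |g t - w t / P t * h t| ≤ |g t| + |w t / P t * h t| := abs_sub _ _
      _ = |g t| + |w t / P t| * |h t| := by rw [abs_mul]
      _ ≤ |g t| + K * |h t| := by
          have := mul_le_mul_of_nonneg_right (hrK t ht) (abs_nonneg (h t))
          linarith
  -- extended primitive
  set f₀ : ℝ → ℝ := (Ioc (0:ℝ) 1).indicator h' with hf₀def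
  have hf₀ : Integrable f₀ volume := (integrable_indicator_iff measurableSet_Ioc).2 hInt'
  set H : ℝ → ℝ := fun x => ∫ t in (0:ℝ)..x, f₀ t with hHdef
  have hHc : Continuous H :=
    intervalIntegral.continuous_primitive (fun a b => hf₀.intervalIntegrable) 0
  have hHh : ∀ x ∈ Icc (0:ℝ) 1, H x = h x := by
    intro x hx
    rw [hHdef]
    show (∫ t in (0:ℝ)..x, f₀ t) = h x
    rw [intervalIntegral.integral_of_le hx.1, hf₀def]
    show (∫ t in Ioc (0:ℝ) x, (Ioc (0:ℝ) 1).indicator h' t) = h x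
    rw [integral_indicator measurableSet_Ioc, Measure.restrict_restrict measurableSet_Ioc]
    have e : Ioc (0:ℝ) 1 ∩ Ioc 0 x = Ioc 0 x := by
      apply inter_eq_self_of_subset_right
      exact Ioc_subset_Ioc le_rfl hx.2
    rw [e, ← hprim' x hx]
  have habsh : IntegrableOn (fun t => |h t|) (Ioc 0 1) := toIoc (contInt hcont.abs)
  have habs' : IntegrableOn (fun t => |h' t|) (Ioc 0 1) := hInt'.abs
  -- psi
  set ψ : ℝ → ℝ := fun x => ∫ t in (0:ℝ)..x, |H t| with hψdef
  have hψd : ∀ x : ℝ, HasDerivAt ψ (|H x|) x := fun x =>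
    (hHc.abs.integral_hasStrictDerivAt 0 x).hasDerivAt
  have hψc : Continuous ψ := by
    apply continuous_iff_continuousAt.mpr
    intro x; exact (hψd x).continuousAt
  have hψeq : ∀ x ∈ Icc (0:ℝ) 1, ψ x = ∫ t in Ioc (0:ℝ) x, |h t| := by
    intro x hx
    rw [hψdef]
    show (∫ t in (0:ℝ)..x, |H t|) = _
    rw [intervalIntegral.integral_of_le hx.1]
    exact setIntegral_congr_fun measurableSet_Ioc (fun t ht => by
      rw [hHh t ⟨ht.1.le, ht.2.trans hx.2⟩])
  have hψnn : ∀ x ∈ Icc (0:ℝ) 1, 0 ≤ ψ x := by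
    intro x hx
    rw [hψeq x hx]
    exact setIntegral_nonneg measurableSet_Ioc (fun t _ => abs_nonneg _)
  -- the basic integral bound |h x| ≤ A + K ψ x
  have hhb : ∀ x ∈ Icc (0:ℝ) 1, |h x| ≤ A + K * ψ x := by
    intro x hx
    have e1 : |h x| ≤ ∫ t in Ioc (0:ℝ) x, |h' t| := by
      rw [hprim' x hx]
      have e0 := norm_integral_le_integral_norm (μ := volume.restrict (Ioc (0:ℝ) x)) h'
      simp only [Real.norm_eq_abs] at e0
      exact e0
    have habs'x : IntegrableOn (fun t => |h' t|) (Ioc 0 x) :=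
      habs'.mono_set (Ioc_subset_Ioc le_rfl hx.2)
    have hgh1 : IntegrableOn (fun t => |g t| + K * |h t|) (Ioc (0:ℝ) 1) :=
      hgabs.add (habsh.const_mul K)
    have hrhsx : IntegrableOn (fun t => |g t| + K * |h t|) (Ioc 0 x) :=
      hgh1.mono_set (Ioc_subset_Ioc le_rfl hx.2)
    have e2 : ∫ t in Ioc (0:ℝ) x, |h' t| ≤ ∫ t in Ioc (0:ℝ) x, (|g t| + K * |h t|) :=
      setIntegral_mono_on habs'x hrhsx measurableSet_Ioc
        (fun t ht => hh'bd t ⟨ht.1.le, ht.2.trans hx.2⟩)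
    have e3 : ∫ t in Ioc (0:ℝ) x, (|g t| + K * |h t|)
        = (∫ t in Ioc (0:ℝ) x, |g t|) + K * ∫ t in Ioc (0:ℝ) x, |h t| := by
      have hKh : IntegrableOn (fun t => K * |h t|) (Ioc (0:ℝ) 1) := habsh.const_mul K
      rw [integral_add (hgabs.mono_set (Ioc_subset_Ioc le_rfl hx.2))
        (hKh.mono_set (Ioc_subset_Ioc le_rfl hx.2)), integral_const_mul]
    have e4 : ∫ t in Ioc (0:ℝ) x, |g t| ≤ A :=
      setIntegral_mono_set hgabs (ae_of_all _ (fun t => abs_nonneg _))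
        (HasSubset.Subset.eventuallyLE (Ioc_subset_Ioc le_rfl hx.2))
    have e5 : ∫ t in Ioc (0:ℝ) x, |h t| = ψ x := (hψeq x hx).symm
    calc |h x| ≤ ∫ t in Ioc (0:ℝ) x, |h' t| := e1
      _ ≤ _ := e2
      _ = (∫ t in Ioc (0:ℝ) x, |g t|) + K * ∫ t in Ioc (0:ℝ) x, |h t| := e3
      _ ≤ A + K * ψ x := by
          rw [e5]
          have := mul_le_mul_of_nonneg_left e4 (le_of_lt hK0)
          linarith [e4]
  -- Gronwall
  have gron := norm_le_gronwallBound_of_norm_deriv_right_le (f := ψ)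
    (f' := fun x => |H x|) (δ := 0) (K := K) (ε := A) (a := 0) (b := 1)
    hψc.continuousOn (fun x _ => (hψd x).hasDerivWithinAt)
    (by simp [hψdef]) ?bound
  case bound =>
    intro x hx
    have hx' : x ∈ Icc (0:ℝ) 1 := ⟨hx.1, hx.2.le⟩
    rw [Real.norm_eq_abs, Real.norm_eq_abs, abs_abs, abs_of_nonneg (hψnn x hx'),
      hHh x hx']
    linarith [hhb x hx']
  have hψle : ∀ x ∈ Icc (0:ℝ) 1, ψ x ≤ A / K * (Real.exp K - 1) := by
    intro x hx
    have := gron x hx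
    rw [Real.norm_eq_abs, abs_of_nonneg (hψnn x hx),
      gronwallBound_of_K_ne_0 hK0.ne'] at this
    simp only [zero_mul, zero_add, sub_zero] at this
    have hmono : Real.exp (K * x) ≤ Real.exp K := by
      apply Real.exp_le_exp.2
      nlinarith [hx.2, hK0]
    have hAK : 0 ≤ A / K := div_nonneg hA0 hK0.le
    calc ψ x ≤ A / K * (Real.exp (K * x) - 1) := this
      _ ≤ A / K * (Real.exp K - 1) := by
          apply mul_le_mul_of_nonneg_left _ hAK
          linarith
  have hS : ∀ x ∈ Icc (0:ℝ) 1, |h x| ≤ A * Real.exp K := by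
    intro x hx
    have e : K * (A / K * (Real.exp K - 1)) = A * (Real.exp K - 1) := by
      field_simp
    have := mul_le_mul_of_nonneg_left (hψle x hx) hK0.le
    calc |h x| ≤ A + K * ψ x := hhb x hx
      _ ≤ A + A * (Real.exp K - 1) := by rw [← e]; linarith
      _ = A * Real.exp K := by ring
  -- integral bounds
  have ih2 : IntervalIntegrable (fun x => h x ^ 2) volume 0 1 := contInt (hcont.pow 2)
  have hh2B : ∫ x in (0:ℝ)..1, h x ^ 2 ≤ B * Real.exp (2*K) := by
    have e1 : ∫ x in (0:ℝ)..1, h x ^ 2 ≤ ∫ x in (0:ℝ)..1, (A * Real.exp K) ^ 2 := by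
      apply intervalIntegral.integral_mono_on h01 ih2 intervalIntegrable_const
      intro x hx
      have e : h x ^ 2 = |h x| ^ 2 := (sq_abs (h x)).symm
      rw [e]
      exact pow_le_pow_left₀ (abs_nonneg _) (hS x hx) 2
    have e2 : ∫ x in (0:ℝ)..1, ((A * Real.exp K) ^ 2 : ℝ) = (A * Real.exp K) ^ 2 := by
      simp
    have e3 : (A * Real.exp K) ^ 2 = A ^ 2 * Real.exp (2*K) := by
      rw [mul_pow, pow_two (Real.exp K), ← Real.exp_add, two_mul]
    have e4 : A ^ 2 * Real.exp (2*K) ≤ B * Real.exp (2*K) :=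
      mul_le_mul_of_nonneg_right hA2B (Real.exp_nonneg _)
    rw [e2, e3] at e1
    linarith
  -- sum bound
  have hsum : ∫ x in (0:ℝ)..1, (h' x ^ 2 + h x ^ 2) ≤ C * B := by
    have p1 : ∀ x ∈ Icc (0:ℝ) 1, h' x ^ 2 + h x ^ 2
        ≤ 2 * g x ^ 2 + (2*K^2+1) * h x ^ 2 := by
      intro x hx
      have e : h' x = g x - w x / P x * h x := by rw [hgx]; ring
      have hr2 : (w x / P x) ^ 2 ≤ K ^ 2 := by
        have := hrK x hx
        have h2 := abs_le.mp this
        nlinarith [h2.1, h2.2]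
      rw [e]
      nlinarith [sq_nonneg (g x + w x / P x * h x), sq_nonneg (h x), hr2,
        mul_nonneg (sub_nonneg.2 hr2) (sq_nonneg (h x))]
    have i1 : IntervalIntegrable (fun x => h' x ^ 2 + h x ^ 2) volume 0 1 := hInt2.add ih2
    have i2 : IntervalIntegrable (fun x => 2 * g x ^ 2 + (2*K^2+1) * h x ^ 2) volume 0 1 :=
      (hg2_int.const_mul 2).add (ih2.const_mul (2*K^2+1))
    have e1 := intervalIntegral.integral_mono_on h01 i1 i2 p1
    have e2 : ∫ x in (0:ℝ)..1, (2 * g x ^ 2 + (2*K^2+1) * h x ^ 2)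
        = 2 * B + (2*K^2+1) * ∫ x in (0:ℝ)..1, h x ^ 2 := by
      rw [intervalIntegral.integral_add (hg2_int.const_mul 2) (ih2.const_mul _),
        intervalIntegral.integral_const_mul, intervalIntegral.integral_const_mul, hBdef]
    have e3 : (2*K^2+1) * ∫ x in (0:ℝ)..1, h x ^ 2 ≤ (2*K^2+1) * (B * Real.exp (2*K)) := by
      apply mul_le_mul_of_nonneg_left hh2B
      positivity
    rw [e2] at e1
    have eC : C * B = 2 * B + (2*K^2+1) * (B * Real.exp (2*K)) := by rw [hCdef]; ring
    linarith
  -- finish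
  have last : α * B ≤ ∫ x in (0:ℝ)..1, P x * g x ^ 2 := by
    have e : α * B = ∫ x in (0:ℝ)..1, α * g x ^ 2 := by
      rw [intervalIntegral.integral_const_mul, hBdef]
    rw [e]
    apply intervalIntegral.integral_mono_on h01 (hg2_int.const_mul α) iPg2
    intro x hx
    exact mul_le_mul_of_nonneg_right (hPα x hx) (sq_nonneg _)
  rw [ge_iff_le, key]
  calc α / C * ∫ x in (0:ℝ)..1, (h' x ^ 2 + h x ^ 2)
      ≤ α / C * (C * B) := by
        apply mul_le_mul_of_nonneg_left hsum
        positivity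
    _ = α * B := by field_simp
    _ ≤ ∫ x in (0:ℝ)..1, P x * g x ^ 2 := last
end

section
/- Let P ∈ C¹, Q ∈ C⁰ on [0,1] with P(x) ≥ α > 0. Suppose there exists γ > 0 with ∫₀¹ P h'² + Q h² dx ≥ γ ∫₀¹ (h'² + h²) dx for all h ∈ H¹₀(0,1). Then whenever u solves (P u')' = Q u on [0,a] for some 0 < a ≤ 1 with u(0) = u(a) = 0, u is identically zero on [0,a]; i.e., no point a ∈ (0,1] is conjugate to 0. -/
open Set MeasureTheory

/-- (C3) ⟹ (C4): if the quadratic form `Γ` is coercive over `H¹₀(0,1)`, then there are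
no conjugate points: any solution of `(P u')' = Q u` on `[0,a]` with `u(0) = u(a) = 0`
for some `0 < a ≤ 1` vanishes identically on `[0,a]`. -/
theorem no_conjugate_points_of_coercive
    (α : ℝ) (hα : 0 < α) (P Q : ℝ → ℝ)
    (hP : ContDiffOn ℝ 1 P (Icc 0 1))
    (hPα : ∀ x ∈ Icc (0:ℝ) 1, α ≤ P x)
    (hQ : ContinuousOn Q (Icc 0 1))
    (hcoer : ∃ γ > (0:ℝ), ∀ h h' : ℝ → ℝ,
      IntervalIntegrable h' volume 0 1 →
      IntervalIntegrable (fun x => h' x ^ 2) volume 0 1 →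
      (∀ x ∈ Icc (0:ℝ) 1, h x = ∫ t in (0:ℝ)..x, h' t) →
      h 1 = 0 →
      (∫ x in (0:ℝ)..1, (P x * h' x ^ 2 + Q x * h x ^ 2))
        ≥ γ * ∫ x in (0:ℝ)..1, (h' x ^ 2 + h x ^ 2)) :
    ∀ a ∈ Ioc (0:ℝ) 1, ∀ u u' : ℝ → ℝ,
      (∀ x ∈ Icc (0:ℝ) a, HasDerivAt u (u' x) x) →
      (∀ x ∈ Icc (0:ℝ) a, HasDerivAt (fun y => P y * u' y) (Q x * u x) x) →
      u 0 = 0 → u a = 0 →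
      ∀ x ∈ Icc (0:ℝ) a, u x = 0 := by
  obtain ⟨γ, hγ, Hco⟩ := hcoer
  rintro a ⟨ha0, ha1⟩ u u' hu hPu h0 haa
  have hIcc : Icc (0:ℝ) a ⊆ Icc (0:ℝ) 1 := Icc_subset_Icc le_rfl ha1
  have hucont : ContinuousOn u (Icc 0 a) := fun x hx =>
    (hu x hx).continuousAt.continuousWithinAt
  have hPucont : ContinuousOn (fun y => P y * u' y) (Icc 0 a) := fun x hx =>
    (hPu x hx).continuousAt.continuousWithinAt
  have hPcont : ContinuousOn P (Icc 0 1) := hP.continuousOn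
  have hPne : ∀ x ∈ Icc (0:ℝ) a, P x ≠ 0 := fun x hx =>
    (lt_of_lt_of_le hα (hPα x (hIcc hx))).ne'
  have hu'cont : ContinuousOn u' (Icc 0 a) := by
    have h1 : ContinuousOn (fun y => (P y * u' y) / P y) (Icc 0 a) :=
      hPucont.div (hPcont.mono hIcc) hPne
    exact h1.congr fun x hx => (mul_div_cancel_left₀ _ (hPne x hx)).symm
  set v : ℝ → ℝ := fun x => if x ≤ a then u x else 0 with hv
  set v' : ℝ → ℝ := fun x => if x ≤ a then u' x else 0 with hv'def
  -- generic integrability for piecewise functions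
  have key_int : ∀ f g : ℝ → ℝ, ContinuousOn g (Icc 0 a) →
      (∀ x, x ∈ Ioc (0:ℝ) a → f x = g x) → (∀ x, x ∈ Ioc a (1:ℝ) → f x = 0) →
      ∀ b c : ℝ, 0 ≤ b → b ≤ c → c ≤ 1 → IntervalIntegrable f volume b c := by
    intro f g hg hfg hf0 b c hb hbc hc1
    rw [intervalIntegrable_iff, uIoc_of_le hbc]
    have h1 : IntegrableOn f (Ioc 0 a) :=
      (hg.integrableOn_Icc.mono_set Ioc_subset_Icc_self).congr_fun
        (fun x hx => (hfg x hx).symm) measurableSet_Ioc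
    have h2 : IntegrableOn f (Ioc a 1) :=
      (integrableOn_zero).congr_fun (fun x hx => (hf0 x hx).symm) measurableSet_Ioc
    have h3 : IntegrableOn f (Ioc 0 1) := by
      have := h1.union h2
      rwa [Ioc_union_Ioc_eq_Ioc ha0.le ha1] at this
    exact h3.mono_set (Ioc_subset_Ioc hb hc1)
  have hv'g : ∀ x, x ∈ Ioc (0:ℝ) a → v' x = u' x := fun x hx => if_pos hx.2
  have hv'0 : ∀ x, x ∈ Ioc a (1:ℝ) → v' x = 0 := fun x hx => if_neg (not_le.2 hx.1)
  have hvg : ∀ x, x ∈ Ioc (0:ℝ) a → v x = u x := fun x hx => if_pos hx.2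
  have hv0 : ∀ x, x ∈ Ioc a (1:ℝ) → v x = 0 := fun x hx => if_neg (not_le.2 hx.1)
  -- FTC representation
  have hrep : ∀ x ∈ Icc (0:ℝ) 1, v x = ∫ t in (0:ℝ)..x, v' t := by
    intro x hx
    have hrep' : ∀ x, 0 ≤ x → x ≤ a → u x = ∫ t in (0:ℝ)..x, v' t := by
      intro x hx0 hxa
      have h1 : ∫ t in (0:ℝ)..x, v' t = ∫ t in (0:ℝ)..x, u' t :=
        intervalIntegral.integral_congr fun t ht => by
          rw [uIcc_of_le hx0] at ht
          exact if_pos (ht.2.trans hxa)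
      have h2 : ∫ t in (0:ℝ)..x, u' t = u x - u 0 :=
        intervalIntegral.integral_eq_sub_of_hasDerivAt
          (fun t ht => hu t (by rw [uIcc_of_le hx0] at ht; exact ⟨ht.1, ht.2.trans hxa⟩))
          ((hu'cont.mono (by rw [uIcc_of_le hx0]; exact Icc_subset_Icc le_rfl hxa)).intervalIntegrable)
      rw [h1, h2, h0, sub_zero]
    rcases le_or_gt x a with hxa | hax
    · rw [show v x = u x from if_pos hxa]; exact hrep' x hx.1 hxa
    · have I1 : IntervalIntegrable v' volume 0 a :=
        key_int v' u' hu'cont hv'g hv'0 0 a le_rfl ha0.le ha1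
      have I2 : IntervalIntegrable v' volume a x :=
        key_int v' u' hu'cont hv'g hv'0 a x ha0.le hax.le hx.2
      have hsplit := intervalIntegral.integral_add_adjacent_intervals I1 I2
      have h2 : ∫ t in a..x, v' t = 0 := by
        rw [intervalIntegral.integral_congr_ae ?_, intervalIntegral.integral_zero]
        · filter_upwards [ae_iff.2 (by simp : volume {(t:ℝ) | ¬ t ≠ a} = 0)] with t ht ht'
          rw [uIoc_of_le hax.le] at ht'
          exact if_neg (not_le.2 ht'.1)
      have h1 : ∫ t in (0:ℝ)..a, v' t = 0 := by
        rw [← hrep' a ha0.le le_rfl, haa]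
      rw [show v x = 0 from if_neg (not_le.2 hax), ← hsplit, h1, h2, zero_add]
  -- value of the quadratic form on the extension
  have hΓa : (∫ x in (0:ℝ)..a, (P x * u' x ^ 2 + Q x * u x ^ 2)) = 0 := by
    have hd : ∀ x ∈ uIcc (0:ℝ) a, HasDerivAt (fun y => P y * u' y * u y)
        (P x * u' x ^ 2 + Q x * u x ^ 2) x := by
      intro x hx
      rw [uIcc_of_le ha0.le] at hx
      have := (hPu x hx).mul (hu x hx)
      convert this using 1
      exacts [rfl, rfl, rfl, by ring]
    have hcont : ContinuousOn (fun x => P x * u' x ^ 2 + Q x * u x ^ 2) (Icc 0 a) :=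
      (((hPcont.mono hIcc).mul (hu'cont.pow 2)).add ((hQ.mono hIcc).mul (hucont.pow 2)))
    have hI : IntervalIntegrable (fun x => P x * u' x ^ 2 + Q x * u x ^ 2) volume 0 a :=
      (hcont.mono (by rw [uIcc_of_le ha0.le])).intervalIntegrable
    rw [intervalIntegral.integral_eq_sub_of_hasDerivAt hd hI, haa, h0]
    ring
  have gcont : ContinuousOn (fun x => P x * u' x ^ 2 + Q x * u x ^ 2) (Icc 0 a) :=
    (((hPcont.mono hIcc).mul (hu'cont.pow 2)).add ((hQ.mono hIcc).mul (hucont.pow 2)))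
  have hfg : ∀ x, x ∈ Ioc (0:ℝ) a →
      P x * v' x ^ 2 + Q x * v x ^ 2 = P x * u' x ^ 2 + Q x * u x ^ 2 := by
    intro x hx; rw [hv'g x hx, hvg x hx]
  have hf0 : ∀ x, x ∈ Ioc a (1:ℝ) → P x * v' x ^ 2 + Q x * v x ^ 2 = 0 := by
    intro x hx; rw [hv'0 x hx, hv0 x hx]; ring
  have hΓ1 : (∫ x in (0:ℝ)..1, (P x * v' x ^ 2 + Q x * v x ^ 2)) = 0 := by
    have I1 := key_int _ _ gcont hfg hf0 0 a le_rfl ha0.le ha1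
    have I2 := key_int _ _ gcont hfg hf0 a 1 ha0.le ha1 le_rfl
    rw [← intervalIntegral.integral_add_adjacent_intervals I1 I2]
    have e2 : (∫ x in a..(1:ℝ), (P x * v' x ^ 2 + Q x * v x ^ 2)) = 0 := by
      rw [intervalIntegral.integral_congr_ae ?_, intervalIntegral.integral_zero]
      filter_upwards [ae_iff.2 (by simp : volume {(t:ℝ) | ¬ t ≠ a} = 0)] with t ht ht'
      rw [uIoc_of_le ha1] at ht'
      exact hf0 t ht'
    have e1 : (∫ x in (0:ℝ)..a, (P x * v' x ^ 2 + Q x * v x ^ 2))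
        = ∫ x in (0:ℝ)..a, (P x * u' x ^ 2 + Q x * u x ^ 2) := by
      apply intervalIntegral.integral_congr
      intro x hx
      rw [uIcc_of_le ha0.le] at hx
      simp only [hv'def, hv, if_pos hx.2]
    rw [e1, e2, hΓa, add_zero]
  -- apply coercivity
  have hv1 : v 1 = 0 := by
    rcases le_or_gt 1 a with h | h
    · have h1 : a = 1 := le_antisymm ha1 h
      rw [← h1]
      simp [hv, haa]
    · exact if_neg (not_le.2 h)
  have Iv' : IntervalIntegrable v' volume 0 1 :=
    key_int v' u' hu'cont hv'g hv'0 0 1 le_rfl zero_le_one le_rfl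
  have Iv'sq : IntervalIntegrable (fun x => v' x ^ 2) volume 0 1 :=
    key_int _ (fun x => u' x ^ 2) (hu'cont.pow 2)
      (fun x hx => by rw [hv'g x hx]) (fun x hx => by rw [hv'0 x hx]; ring) 0 1 le_rfl zero_le_one le_rfl
  have Ivsq : ∀ b c : ℝ, 0 ≤ b → b ≤ c → c ≤ 1 → IntervalIntegrable (fun x => v x ^ 2) volume b c :=
    key_int _ (fun x => u x ^ 2) (hucont.pow 2)
      (fun x hx => by rw [hvg x hx]) (fun x hx => by rw [hv0 x hx]; ring)
  have hco := Hco v v' Iv' Iv'sq hrep hv1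
  rw [hΓ1] at hco
  have hS : (∫ x in (0:ℝ)..1, (v' x ^ 2 + v x ^ 2)) ≤ 0 := by
    nlinarith
  have hsplit : (∫ x in (0:ℝ)..1, (v' x ^ 2 + v x ^ 2))
      = (∫ x in (0:ℝ)..1, v' x ^ 2) + ∫ x in (0:ℝ)..1, v x ^ 2 :=
    intervalIntegral.integral_add Iv'sq (Ivsq 0 1 le_rfl zero_le_one le_rfl)
  have n1 : (0:ℝ) ≤ ∫ x in (0:ℝ)..1, v' x ^ 2 :=
    intervalIntegral.integral_nonneg zero_le_one fun x _ => sq_nonneg _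
  have n2 : (0:ℝ) ≤ ∫ x in (0:ℝ)..1, v x ^ 2 :=
    intervalIntegral.integral_nonneg zero_le_one fun x _ => sq_nonneg _
  have hvsq0 : (∫ x in (0:ℝ)..1, v x ^ 2) = 0 := by
    rw [hsplit] at hS; linarith
  -- reduce to [0, a]
  have husq0 : (∫ x in (0:ℝ)..a, u x ^ 2) = 0 := by
    have e1 : (∫ x in (0:ℝ)..a, v x ^ 2) = ∫ x in (0:ℝ)..a, u x ^ 2 := by
      apply intervalIntegral.integral_congr
      intro x hx
      rw [uIcc_of_le ha0.le] at hx
      simp only [hv, if_pos hx.2]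
    have e2 : (∫ x in a..(1:ℝ), v x ^ 2) = 0 := by
      have : EqOn (fun x => v x ^ 2) (fun _ => (0:ℝ)) (uIcc a 1) := by
        intro x hx
        rw [uIcc_of_le ha1] at hx
        rcases eq_or_lt_of_le hx.1 with h | h
        · simp only [hv, ← h, if_pos le_rfl, haa]; ring
        · simp only [hv, if_neg (not_le.2 h)]; ring
      rw [intervalIntegral.integral_congr this, intervalIntegral.integral_const]
      simp
    rw [← intervalIntegral.integral_add_adjacent_intervals
      (Ivsq 0 a le_rfl ha0.le ha1) (Ivsq a 1 ha0.le ha1 le_rfl), e2, add_zero] at hvsq0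
    rw [← e1]
    exact hvsq0
  -- conclude pointwise vanishing
  have hae : (fun x => u x ^ 2) =ᵐ[volume.restrict (Icc (0:ℝ) a)] (fun _ => (0:ℝ)) := by
    have hInt : IntegrableOn (fun x => u x ^ 2) (Icc 0 a) := (hucont.pow 2).integrableOn_Icc
    have hIcceq : (∫ x in Icc (0:ℝ) a, u x ^ 2) = 0 := by
      rw [MeasureTheory.integral_Icc_eq_integral_Ioc,
        ← intervalIntegral.integral_of_le ha0.le]
      exact husq0
    exact (integral_eq_zero_iff_of_nonneg (fun x => sq_nonneg _) hInt).mp hIcceq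
  have heq : EqOn (fun x => u x ^ 2) (fun _ => (0:ℝ)) (Icc 0 a) := by
    apply Measure.eqOn_of_ae_eq hae (hucont.pow 2) continuousOn_const
    rw [interior_Icc, closure_Ioo ha0.ne]
  intro x hx
  have := heq hx
  simpa using this
end

section
/- Suppose Q : [0,1] → ℝ is continuous with ∫₀¹ P(x)h'(x)² + Q(x)h(x)² dx ≥ 0 for all h ∈ C¹₀([0,1]), where P is continuous. Then if additionally there is a strictly positive solution u of (Pu')' = Qu on [0,1] with P ∈ C¹ and P ≥ α > 0, we have Γ(h) = 0 for h ∈ C¹₀ only if h ≡ 0. -/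
open Set

/-- If `Γ(h) ≥ 0` for all `h ∈ C¹₀([0,1])` and there is a strictly positive solution of
`(P u')' = Q u` on `[0,1]`, then `Γ(h) = 0` for `h ∈ C¹₀` only when `h ≡ 0`;
i.e. `Γ` is positive definite. -/
theorem gamma_positive_definite
    (α : ℝ) (hα : 0 < α) (P Q : ℝ → ℝ)
    (hP : ContDiffOn ℝ 1 P (Icc 0 1))
    (hPα : ∀ x ∈ Icc (0:ℝ) 1, α ≤ P x)
    (hQ : ContinuousOn Q (Icc 0 1))
    (hnonneg : ∀ h h' : ℝ → ℝ,
      (∀ x ∈ Icc (0:ℝ) 1, HasDerivAt h (h' x) x) →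
      ContinuousOn h' (Icc 0 1) →
      h 0 = 0 → h 1 = 0 →
      0 ≤ ∫ x in (0:ℝ)..1, (P x * h' x ^ 2 + Q x * h x ^ 2))
    (u u' : ℝ → ℝ)
    (hu : ∀ x ∈ Icc (0:ℝ) 1, HasDerivAt u (u' x) x)
    (hode : ∀ x ∈ Icc (0:ℝ) 1, HasDerivAt (fun y => P y * u' y) (Q x * u x) x)
    (hupos : ∀ x ∈ Icc (0:ℝ) 1, 0 < u x) :
    ∀ h h' : ℝ → ℝ,
      (∀ x ∈ Icc (0:ℝ) 1, HasDerivAt h (h' x) x) →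
      ContinuousOn h' (Icc 0 1) →
      h 0 = 0 → h 1 = 0 →
      (∫ x in (0:ℝ)..1, (P x * h' x ^ 2 + Q x * h x ^ 2)) = 0 →
      ∀ x ∈ Icc (0:ℝ) 1, h x = 0 := by
  intro h h' hh hh' h0 h1 hΓ
  have hPc : ContinuousOn P (Icc 0 1) := hP.continuousOn
  have huc : ContinuousOn u (Icc 0 1) :=
    fun x hx => (hu x hx).continuousAt.continuousWithinAt
  have hhc : ContinuousOn h (Icc 0 1) :=
    fun x hx => (hh x hx).continuousAt.continuousWithinAt
  have hPu'c : ContinuousOn (fun y => P y * u' y) (Icc 0 1) :=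
    fun x hx => (hode x hx).continuousAt.continuousWithinAt
  have hPpos : ∀ x ∈ Icc (0:ℝ) 1, 0 < P x := fun x hx => hα.trans_le (hPα x hx)
  have hPne : ∀ x ∈ Icc (0:ℝ) 1, P x ≠ 0 := fun x hx => (hPpos x hx).ne'
  have hune : ∀ x ∈ Icc (0:ℝ) 1, u x ≠ 0 := fun x hx => (hupos x hx).ne'
  have hu'c : ContinuousOn u' (Icc 0 1) := by
    have h2 : ContinuousOn (fun y => (P y * u' y) / P y) (Icc 0 1) :=
      hPu'c.div hPc hPne
    exact h2.congr fun x hx => by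
      field_simp [hPne x hx]
  -- w and F
  set w : ℝ → ℝ := fun x => h' x - h x * u' x / u x with hwdef
  set F : ℝ → ℝ := fun x => P x * u' x * (h x ^ 2 / u x) with hFdef
  set F' : ℝ → ℝ := fun x => Q x * u x * (h x ^ 2 / u x) +
      P x * u' x * ((2 * h x * h' x * u x - h x ^ 2 * u' x) / u x ^ 2) with hF'def
  have hFd : ∀ x ∈ Icc (0:ℝ) 1, HasDerivAt F (F' x) x := by
    intro x hx
    have hsq : HasDerivAt (fun y => h y ^ 2) (2 * h x * h' x) x := by
      have := (hh x hx).fun_pow 2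
      simpa [mul_comm, mul_assoc, mul_left_comm] using this
    have hquot : HasDerivAt (fun y => h y ^ 2 / u y)
        ((2 * h x * h' x * u x - h x ^ 2 * u' x) / u x ^ 2) x :=
      hsq.div (hu x hx) (hune x hx)
    exact (hode x hx).mul hquot
  -- pointwise identity
  have key : ∀ x ∈ Icc (0:ℝ) 1,
      P x * h' x ^ 2 + Q x * h x ^ 2 = P x * w x ^ 2 + F' x := by
    intro x hx
    have hune' := hune x hx
    simp only [hwdef, hF'def]
    field_simp
    ring
  -- continuity of pieces
  have hwc : ContinuousOn w (Icc 0 1) :=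
    hh'.sub ((hhc.mul hu'c).div huc hune)
  have hPw2c : ContinuousOn (fun x => P x * w x ^ 2) (Icc 0 1) :=
    hPc.mul (hwc.pow 2)
  have hF'c : ContinuousOn F' (Icc 0 1) := by
    apply ContinuousOn.add
    · exact (hQ.mul huc).mul ((hhc.pow 2).div huc hune)
    · exact hPu'c.mul (((((continuousOn_const.mul hhc).mul hh').mul huc).sub
        ((hhc.pow 2).mul hu'c)).div (huc.pow 2) (fun x hx => pow_ne_zero 2 (hune x hx)))
  have huIcc : uIcc (0:ℝ) 1 = Icc 0 1 := uIcc_of_le zero_le_one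
  have hint1 : IntervalIntegrable (fun x => P x * w x ^ 2) MeasureTheory.volume 0 1 :=
    (hPw2c.mono (by rw [huIcc])).intervalIntegrable
  have hint2 : IntervalIntegrable F' MeasureTheory.volume 0 1 :=
    (hF'c.mono (by rw [huIcc])).intervalIntegrable
  -- FTC
  have hFTC : (∫ x in (0:ℝ)..1, F' x) = F 1 - F 0 :=
    intervalIntegral.integral_eq_sub_of_hasDerivAt (fun x hx => hFd x (huIcc ▸ hx)) hint2
  have hF0 : F 0 = 0 := by simp [hFdef, h0]
  have hF1 : F 1 = 0 := by simp [hFdef, h1]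
  have hsplit : (∫ x in (0:ℝ)..1, (P x * h' x ^ 2 + Q x * h x ^ 2))
      = (∫ x in (0:ℝ)..1, P x * w x ^ 2) + ∫ x in (0:ℝ)..1, F' x := by
    rw [← intervalIntegral.integral_add hint1 hint2]
    apply intervalIntegral.integral_congr
    intro x hx
    exact key x (huIcc ▸ hx)
  have hzero : (∫ x in (0:ℝ)..1, P x * w x ^ 2) = 0 := by
    have := hΓ
    rw [hsplit, hFTC, hF0, hF1] at this
    linarith
  -- w = 0 on Icc
  have hwz : ∀ x ∈ Icc (0:ℝ) 1, w x = 0 := by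
    intro x hx
    by_contra hne
    have hpos : 0 < P x * w x ^ 2 :=
      mul_pos (hPpos x hx) (lt_of_le_of_ne (sq_nonneg _) (Ne.symm (pow_ne_zero 2 hne)))
    have : 0 < ∫ x in (0:ℝ)..1, P x * w x ^ 2 := by
      apply intervalIntegral.integral_pos zero_lt_one hPw2c
      · intro y hy
        exact mul_nonneg (hPpos y ⟨hy.1.le, hy.2⟩).le (sq_nonneg _)
      · exact ⟨x, hx, hpos⟩
    linarith [hzero ▸ this]
  -- h/u constant
  have hdiv : ∀ x ∈ Icc (0:ℝ) 1, h x / u x = h 0 / u 0 := by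
    have hderiv : ∀ x ∈ Ico (0:ℝ) 1, HasDerivWithinAt (fun y => h y / u y) 0 (Ici x) x := by
      intro x hx
      have hx' : x ∈ Icc (0:ℝ) 1 := ⟨hx.1, hx.2.le⟩
      have hd : HasDerivAt (fun y => h y / u y)
          ((h' x * u x - h x * u' x) / u x ^ 2) x := (hh x hx').div (hu x hx') (hune x hx')
      have : (h' x * u x - h x * u' x) / u x ^ 2 = 0 := by
        have hw0 := hwz x hx'
        have : h' x = h x * u' x / u x := by
          have := sub_eq_zero.mp hw0
          linarith [this]
        rw [this, div_mul_cancel₀ _ (hune x hx'), sub_self, zero_div]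
      rw [this] at hd
      exact hd.hasDerivWithinAt
    have hcont : ContinuousOn (fun y => h y / u y) (Icc 0 1) := hhc.div huc hune
    exact fun x hx => constant_of_has_deriv_right_zero hcont hderiv x hx
  intro x hx
  have := hdiv x hx
  rw [h0, zero_div] at this
  exact (div_eq_zero_iff.mp this).resolve_right (hune x hx)
end

section
/- Let P ∈ C¹ with P ≥ α > 0 and Q ∈ C⁰ on [0,1]. If u solves (P u')' = Q u on [0,a] with u(0) = u(a) = 0 (0 < a ≤ 1), and u is extended by zero to [a,1], then the extension lies in H¹₀(0,1) and Γ(u) = ∫₀¹ P u'² + Q u² dx = 0. -/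
open Set MeasureTheory

/-- Helper: a function vanishing on `Ioc a b` is interval integrable on `[a,b]`. -/
lemma zero_on_Ioc_intervalIntegrable (f : ℝ → ℝ) (a b : ℝ) (hab : a ≤ b)
    (h : ∀ x ∈ Ioc a b, f x = 0) : IntervalIntegrable f volume a b := by
  rw [intervalIntegrable_iff_integrableOn_Ioc_of_le hab]
  exact (integrableOn_zero).congr_fun
    (fun x hx => (h x hx).symm) measurableSet_Ioc

/-- Helper: a function vanishing on `Ioc a b` has zero integral on `[a,b]`. -/
lemma zero_on_Ioc_integral (f : ℝ → ℝ) (a b : ℝ) (hab : a ≤ b)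
    (h : ∀ x ∈ Ioc a b, f x = 0) : (∫ x in a..b, f x) = 0 := by
  rw [intervalIntegral.integral_of_le hab,
    MeasureTheory.setIntegral_congr_fun measurableSet_Ioc h]
  simp

/-- If `u` solves `(P u')' = Q u` on `[0,a]` with `u(0) = u(a) = 0` (`0 < a ≤ 1`), then
its extension by zero to `[0,1]` lies in `H¹₀(0,1)` (it is the primitive of a
square-integrable function vanishing at `0` and `1`) and `Γ(u) = ∫₀¹ P u'² + Q u² = 0`. -/
theorem extension_in_H10_and_gamma_zero
    (α : ℝ) (hα : 0 < α) (P Q : ℝ → ℝ) (a : ℝ) (ha : a ∈ Ioc (0:ℝ) 1)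
    (hP : ContDiffOn ℝ 1 P (Icc 0 1))
    (hPα : ∀ x ∈ Icc (0:ℝ) 1, α ≤ P x)
    (hQ : ContinuousOn Q (Icc 0 1))
    (u u' : ℝ → ℝ)
    (hu : ∀ x ∈ Icc (0:ℝ) a, HasDerivAt u (u' x) x)
    (hu'c : ContinuousOn u' (Icc 0 a))
    (hode : ∀ x ∈ Icc (0:ℝ) a, HasDerivAt (fun y => P y * u' y) (Q x * u x) x)
    (hu0 : u 0 = 0) (hua : u a = 0) :
    (IntervalIntegrable (fun x => if x ≤ a then u' x else 0) volume 0 1) ∧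
    (IntervalIntegrable (fun x => (if x ≤ a then u' x else 0) ^ 2) volume 0 1) ∧
    (∀ x ∈ Icc (0:ℝ) 1,
      (if x ≤ a then u x else 0) = ∫ t in (0:ℝ)..x, (if t ≤ a then u' t else 0)) ∧
    ((if (1:ℝ) ≤ a then u 1 else 0) = 0) ∧
    ((∫ x in (0:ℝ)..1,
        (P x * (if x ≤ a then u' x else 0) ^ 2
          + Q x * (if x ≤ a then u x else 0) ^ 2)) = 0) := by
  obtain ⟨ha0, ha1⟩ := ha
  have hIcc : Icc (0:ℝ) a ⊆ Icc 0 1 := Icc_subset_Icc le_rfl ha1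
  have huc : ContinuousOn u (Icc 0 a) := fun x hx =>
    (hu x hx).continuousAt.continuousWithinAt
  have hPc : ContinuousOn P (Icc 0 a) := hP.continuousOn.mono hIcc
  have hQc : ContinuousOn Q (Icc 0 a) := hQ.mono hIcc
  set v : ℝ → ℝ := fun x => if x ≤ a then u' x else 0 with hv
  -- continuity / integrability of v on [0,a]
  have hvca : ContinuousOn v (Icc 0 a) := by
    apply hu'c.congr
    intro x hx
    simp [hv, hx.2]
  have hv0a : IntervalIntegrable v volume 0 a :=
    ContinuousOn.intervalIntegrable (by rwa [uIcc_of_le ha0.le])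
  have hv2ca : ContinuousOn (fun x => v x ^ 2) (Icc 0 a) := hvca.pow 2
  have hv20a : IntervalIntegrable (fun x => v x ^ 2) volume 0 a :=
    ContinuousOn.intervalIntegrable (by rwa [uIcc_of_le ha0.le])
  -- v vanishes on (a, b]
  have hvz : ∀ b : ℝ, ∀ x ∈ Ioc a b, v x = 0 := by
    intro b x hx
    simp [hv, not_le.mpr hx.1]
  have hva1 : IntervalIntegrable v volume a 1 :=
    zero_on_Ioc_intervalIntegrable v a 1 ha1 (hvz 1)
  have hv2a1 : IntervalIntegrable (fun x => v x ^ 2) volume a 1 :=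
    zero_on_Ioc_intervalIntegrable _ a 1 ha1 (fun x hx => by rw [hvz 1 x hx]; ring)
  refine ⟨hv0a.trans hva1, hv20a.trans hv2a1, ?_, ?_, ?_⟩
  · -- representation as primitive
    have hFTCu : ∀ x ∈ Icc (0:ℝ) a, (∫ t in (0:ℝ)..x, u' t) = u x := by
      intro x hx
      have h := intervalIntegral.integral_eq_sub_of_hasDerivAt
        (f := u) (f' := u') (a := 0) (b := x)
        (fun t ht => hu t (by
          rw [uIcc_of_le hx.1] at ht
          exact ⟨ht.1, ht.2.trans hx.2⟩))
        (ContinuousOn.intervalIntegrable (by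
          rw [uIcc_of_le hx.1]
          exact hu'c.mono (Icc_subset_Icc le_rfl hx.2)))
      rw [h, hu0, sub_zero]
    have hv0aInt : (∫ t in (0:ℝ)..a, v t) = 0 := by
      have : (∫ t in (0:ℝ)..a, v t) = ∫ t in (0:ℝ)..a, u' t := by
        apply intervalIntegral.integral_congr
        intro t ht
        rw [uIcc_of_le ha0.le] at ht
        simp [hv, ht.2]
      rw [this, hFTCu a ⟨ha0.le, le_rfl⟩, hua]
    intro x hx
    by_cases hxa : x ≤ a
    · simp only [if_pos hxa]
      have hcg : (∫ t in (0:ℝ)..x, v t) = ∫ t in (0:ℝ)..x, u' t := by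
        apply intervalIntegral.integral_congr
        intro t ht
        rw [uIcc_of_le hx.1] at ht
        simp [hv, ht.2.trans hxa]
      rw [hcg, hFTCu x ⟨hx.1, hxa⟩]
    · push_neg at hxa
      simp only [if_neg (not_le.mpr hxa)]
      have hvax : IntervalIntegrable v volume a x :=
        zero_on_Ioc_intervalIntegrable v a x hxa.le (hvz x)
      have hsplit : (∫ t in (0:ℝ)..a, v t) + (∫ t in a..x, v t) = ∫ t in (0:ℝ)..x, v t :=
        intervalIntegral.integral_add_adjacent_intervals hv0a hvax
      rw [← hsplit, hv0aInt, zero_on_Ioc_integral v a x hxa.le (hvz x)]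
      ring
  · -- value at 1
    by_cases h1 : (1:ℝ) ≤ a
    · have : a = 1 := le_antisymm ha1 h1
      rw [if_pos h1, ← this, hua]
    · rw [if_neg h1]
  · -- Γ(u) = 0
    set g : ℝ → ℝ := fun x =>
      P x * (if x ≤ a then u' x else 0) ^ 2 + Q x * (if x ≤ a then u x else 0) ^ 2 with hg
    set F : ℝ → ℝ := fun x => P x * u' x ^ 2 + Q x * u x ^ 2 with hF
    have hFc : ContinuousOn F (Icc 0 a) :=
      (hPc.mul (hu'c.pow 2)).add (hQc.mul (huc.pow 2))
    have hF0a : IntervalIntegrable F volume 0 a :=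
      ContinuousOn.intervalIntegrable (by rwa [uIcc_of_le ha0.le])
    have hgF : ∀ x ∈ Icc (0:ℝ) a, g x = F x := by
      intro x hx
      simp [hg, hF, hx.2]
    have hgz : ∀ x ∈ Ioc a (1:ℝ), g x = 0 := by
      intro x hx
      simp [hg, not_le.mpr hx.1]
    have hg0a : IntervalIntegrable g volume 0 a := by
      apply hF0a.congr
      intro x hx
      rw [uIoc_of_le ha0.le] at hx
      exact (hgF x ⟨hx.1.le, hx.2⟩).symm
    have hga1 : IntervalIntegrable g volume a 1 :=
      zero_on_Ioc_intervalIntegrable g a 1 ha1 hgz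
    have hsplit : (∫ x in (0:ℝ)..a, g x) + (∫ x in a..1, g x) = ∫ x in (0:ℝ)..1, g x :=
      intervalIntegral.integral_add_adjacent_intervals hg0a hga1
    -- FTC for G = P u' u
    have hG : ∀ x ∈ Icc (0:ℝ) a, HasDerivAt (fun y => P y * u' y * u y) (F x) x := by
      intro x hx
      have h := (hode x hx).mul (hu x hx)
      have : Q x * u x * u x + P x * u' x * u' x = F x := by rw [hF]; ring
      rw [← this]
      exact h
    have hintF : (∫ x in (0:ℝ)..a, F x) = 0 := by
      have h := intervalIntegral.integral_eq_sub_of_hasDerivAt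
        (f := fun y => P y * u' y * u y) (f' := F) (a := 0) (b := a)
        (fun t ht => hG t (by rwa [uIcc_of_le ha0.le] at ht))
        hF0a
      rw [h]
      simp [hu0, hua]
    have hg0aInt : (∫ x in (0:ℝ)..a, g x) = 0 := by
      have hcg : (∫ x in (0:ℝ)..a, g x) = ∫ x in (0:ℝ)..a, F x := by
        apply intervalIntegral.integral_congr
        intro t ht
        rw [uIcc_of_le ha0.le] at ht
        exact hgF t ht
      rw [hcg, hintF]
    have : (∫ x in (0:ℝ)..1, g x) = 0 := by
      rw [← hsplit, hg0aInt, zero_on_Ioc_integral g a 1 ha1 hgz]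
      ring
    exact this
end

section
/- Let f : ℝ × ℝ × [0,1] → ℝ be C², and let y* ∈ C¹([0,1]) with y*(0) = y*(1) = 0 satisfy the Euler equation d/dx [f_{y'}(y*'(x), y*(x), x)] = f_y(y*'(x), y*(x), x). If the 2×2 Hessian ∇²_z f(z,x) evaluated at z = (y*'(x), y*(x)) is positive definite for every x ∈ [0,1], then y* is a strict local minimizer of F(y) = ∫₀¹ f(y'(x), y(x), x) dx over C¹ functions with zero boundary values, in the C¹ max-norm. -/
open Set

namespace SLM
noncomputable def Fn (f : ℝ → ℝ → ℝ → ℝ) : ℝ × ℝ × ℝ → ℝ := fun p => f p.1 p.2.1 p.2.2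
noncomputable def DD (f : ℝ → ℝ → ℝ → ℝ) (p : ℝ × ℝ × ℝ) : (ℝ × ℝ × ℝ) →L[ℝ] (ℝ × ℝ × ℝ) →L[ℝ] ℝ :=
  fderiv ℝ (fderiv ℝ (Fn f)) p
noncomputable def Qf (f : ℝ → ℝ → ℝ → ℝ) (p : ℝ × ℝ × ℝ) (v : ℝ × ℝ) : ℝ :=
  DD f p (v.1, v.2, 0) (v.1, v.2, 0)
variable {f : ℝ → ℝ → ℝ → ℝ}
theorem diffF (hf : ContDiff ℝ 2 (Fn f)) : Differentiable ℝ (Fn f) := hf.differentiable (by norm_num)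
theorem contDiff_fderivF (hf : ContDiff ℝ 2 (Fn f)) : ContDiff ℝ 1 (fderiv ℝ (Fn f)) :=
  hf.fderiv_right (by norm_num)
theorem hasFDerivAt_fderivF (hf : ContDiff ℝ 2 (Fn f)) (p : ℝ × ℝ × ℝ) :
    HasFDerivAt (fderiv ℝ (Fn f)) (DD f p) p :=
  ((contDiff_fderivF hf).differentiable (by norm_num) p).hasFDerivAt
theorem hasDerivAt_line (hf : ContDiff ℝ 2 (Fn f)) (p w : ℝ × ℝ × ℝ) (t : ℝ) :
    HasDerivAt (fun s : ℝ => Fn f (p + s • w)) (fderiv ℝ (Fn f) (p + t • w) w) t := by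
  have hγ : HasDerivAt (fun s : ℝ => p + s • w) w t := by
    simpa using ((hasDerivAt_id t).smul_const w).const_add p
  exact (diffF hf _).hasFDerivAt.comp_hasDerivAt t hγ
theorem hasDerivAt_fderiv_line (hf : ContDiff ℝ 2 (Fn f)) (p w u : ℝ × ℝ × ℝ) (t : ℝ) :
    HasDerivAt (fun s : ℝ => fderiv ℝ (Fn f) (p + s • w) u) ((DD f (p + t • w) w) u) t := by
  have hγ : HasDerivAt (fun s : ℝ => p + s • w) w t := by
    simpa using ((hasDerivAt_id t).smul_const w).const_add p
  have h1 : HasDerivAt (fun s : ℝ => fderiv ℝ (Fn f) (p + s • w)) (DD f (p + t • w) w) t :=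
    (hasFDerivAt_fderivF hf _).comp_hasDerivAt t hγ
  simpa using h1.clm_apply (hasDerivAt_const t u)

theorem hasDerivAt_slice1 (hf : ContDiff ℝ 2 (Fn f)) (a b x : ℝ) :
    HasDerivAt (fun t => f t b x) (fderiv ℝ (Fn f) (a, b, x) (1, 0, 0)) a := by
  have h := hasDerivAt_line hf (0, b, x) (1, 0, 0) a
  have he : ((0, b, x) : ℝ × ℝ × ℝ) + a • ((1:ℝ), (0:ℝ), (0:ℝ)) = (a, b, x) := by
    simp [Prod.ext_iff]
  rw [he] at h
  have hfun : (fun s : ℝ => Fn f ((0, b, x) + s • ((1:ℝ), (0:ℝ), (0:ℝ)))) = fun t => f t b x := by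
    funext s; simp [Fn, Prod.ext_iff]
  rwa [hfun] at h

theorem hasDerivAt_slice2 (hf : ContDiff ℝ 2 (Fn f)) (a b x : ℝ) :
    HasDerivAt (fun t => f a t x) (fderiv ℝ (Fn f) (a, b, x) (0, 1, 0)) b := by
  have h := hasDerivAt_line hf (a, 0, x) (0, 1, 0) b
  have he : ((a, 0, x) : ℝ × ℝ × ℝ) + b • ((0:ℝ), (1:ℝ), (0:ℝ)) = (a, b, x) := by
    simp [Prod.ext_iff]
  rw [he] at h
  have hfun : (fun s : ℝ => Fn f ((a, 0, x) + s • ((0:ℝ), (1:ℝ), (0:ℝ)))) = fun t => f a t x := by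
    funext s; simp [Fn, Prod.ext_iff]
  rwa [hfun] at h

theorem deriv_slice1 (hf : ContDiff ℝ 2 (Fn f)) (a b x : ℝ) :
    deriv (fun t => f t b x) a = fderiv ℝ (Fn f) (a, b, x) (1, 0, 0) :=
  (hasDerivAt_slice1 hf a b x).deriv

theorem deriv_slice2 (hf : ContDiff ℝ 2 (Fn f)) (a b x : ℝ) :
    deriv (fun t => f a t x) b = fderiv ℝ (Fn f) (a, b, x) (0, 1, 0) :=
  (hasDerivAt_slice2 hf a b x).deriv

theorem sec11 (hf : ContDiff ℝ 2 (Fn f)) (a b x : ℝ) :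
    deriv (fun s => deriv (fun t => f t b x) s) a = DD f (a, b, x) (1, 0, 0) (1, 0, 0) := by
  have hfun : (fun s => deriv (fun t => f t b x) s)
      = fun s : ℝ => fderiv ℝ (Fn f) ((0, b, x) + s • ((1:ℝ), (0:ℝ), (0:ℝ))) (1, 0, 0) := by
    funext s
    rw [deriv_slice1 hf s b x]
    congr 1
    simp [Prod.ext_iff]
  rw [hfun]
  have h := (hasDerivAt_fderiv_line hf (0, b, x) (1, 0, 0) (1, 0, 0) a).deriv
  rw [h]
  congr 2 <;> simp [Prod.ext_iff]

theorem sec21 (hf : ContDiff ℝ 2 (Fn f)) (a b x : ℝ) :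
    deriv (fun s => deriv (fun t => f t s x) a) b = DD f (a, b, x) (0, 1, 0) (1, 0, 0) := by
  have hfun : (fun s => deriv (fun t => f t s x) a)
      = fun s : ℝ => fderiv ℝ (Fn f) ((a, 0, x) + s • ((0:ℝ), (1:ℝ), (0:ℝ))) (1, 0, 0) := by
    funext s
    rw [deriv_slice1 hf a s x]
    congr 1
    simp [Prod.ext_iff]
  rw [hfun]
  have h := (hasDerivAt_fderiv_line hf (a, 0, x) (0, 1, 0) (1, 0, 0) b).deriv
  rw [h]
  congr 2 <;> simp [Prod.ext_iff]

theorem sec22 (hf : ContDiff ℝ 2 (Fn f)) (a b x : ℝ) :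
    deriv (fun s => deriv (fun t => f a t x) s) b = DD f (a, b, x) (0, 1, 0) (0, 1, 0) := by
  have hfun : (fun s => deriv (fun t => f a t x) s)
      = fun s : ℝ => fderiv ℝ (Fn f) ((a, 0, x) + s • ((0:ℝ), (1:ℝ), (0:ℝ))) (0, 1, 0) := by
    funext s
    rw [deriv_slice2 hf a s x]
    congr 1
    simp [Prod.ext_iff]
  rw [hfun]
  have h := (hasDerivAt_fderiv_line hf (a, 0, x) (0, 1, 0) (0, 1, 0) b).deriv
  rw [h]
  congr 2 <;> simp [Prod.ext_iff]

theorem DD_symm (hf : ContDiff ℝ 2 (Fn f)) (p v w : ℝ × ℝ × ℝ) :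
    DD f p v w = DD f p w v :=
  second_derivative_symmetric (fun q => (diffF hf q).hasFDerivAt) (hasFDerivAt_fderivF hf p) v w

theorem Qf_eq_hess (hf : ContDiff ℝ 2 (Fn f)) (a b x : ℝ) (v : ℝ × ℝ) :
    Qf f (a, b, x) v
      = deriv (fun s => deriv (fun t => f t b x) s) a * v.1 ^ 2
        + 2 * deriv (fun s => deriv (fun t => f t s x) a) b * v.1 * v.2
        + deriv (fun s => deriv (fun t => f a t x) s) b * v.2 ^ 2 := by
  rw [sec11 hf, sec21 hf, sec22 hf]
  have hv : ((v.1, v.2, (0:ℝ)) : ℝ × ℝ × ℝ)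
      = v.1 • ((1:ℝ), (0:ℝ), (0:ℝ)) + v.2 • ((0:ℝ), (1:ℝ), (0:ℝ)) := by
    simp [Prod.ext_iff]
  have hsym : DD f (a, b, x) (1, 0, 0) (0, 1, 0) = DD f (a, b, x) (0, 1, 0) (1, 0, 0) :=
    DD_symm hf _ _ _
  rw [Qf, hv]
  simp only [map_add, map_smul, ContinuousLinearMap.add_apply, ContinuousLinearMap.coe_smul',
    Pi.smul_apply, smul_eq_mul]
  rw [hsym]; ring
theorem continuous_Qf (hf : ContDiff ℝ 2 (Fn f)) :
    Continuous (fun q : (ℝ × ℝ × ℝ) × (ℝ × ℝ) => Qf f q.1 q.2) := by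
  have hDD : Continuous (DD f) := (contDiff_fderivF hf).continuous_fderiv (by norm_num)
  have hv : Continuous (fun q : (ℝ × ℝ × ℝ) × (ℝ × ℝ) => ((q.2.1, q.2.2, 0) : ℝ × ℝ × ℝ)) := by
    fun_prop
  exact ((hDD.comp continuous_fst).clm_apply hv).clm_apply hv

theorem Qf_smul (p : ℝ × ℝ × ℝ) (t : ℝ) (v : ℝ × ℝ) :
    Qf f p (t • v) = t ^ 2 * Qf f p v := by
  have : (((t • v).1, (t • v).2, (0:ℝ)) : ℝ × ℝ × ℝ) = t • ((v.1, v.2, 0) : ℝ × ℝ × ℝ) := by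
    simp [Prod.ext_iff]
  rw [Qf, this, map_smul]
  simp only [ContinuousLinearMap.smul_apply, map_smul, smul_eq_mul]
  rw [Qf]; ring

theorem tube (hf : ContDiff ℝ 2 (Fn f)) (c : ℝ → ℝ × ℝ × ℝ) (hc : ContinuousOn c (Icc 0 1))
    (hpos : ∀ x ∈ Icc (0:ℝ) 1, ∀ v : ℝ × ℝ, v ≠ 0 → 0 < Qf f (c x) v) :
    ∃ δ > (0:ℝ), ∀ x ∈ Icc (0:ℝ) 1, ∀ p : ℝ × ℝ × ℝ, dist p (c x) < δ →
      ∀ v : ℝ × ℝ, v ≠ 0 → 0 < Qf f p v := by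
  have hK : IsCompact ((c '' Icc 0 1) ×ˢ (Metric.sphere (0 : ℝ × ℝ) 1)) :=
    (isCompact_Icc.image_of_continuousOn hc).prod (isCompact_sphere (0 : ℝ × ℝ) 1)
  have hU : IsOpen {q : (ℝ × ℝ × ℝ) × (ℝ × ℝ) | 0 < Qf f q.1 q.2} :=
    isOpen_lt continuous_const (continuous_Qf hf)
  have hKU : (c '' Icc 0 1) ×ˢ (Metric.sphere (0 : ℝ × ℝ) 1) ⊆ {q | 0 < Qf f q.1 q.2} := by
    rintro ⟨p, v⟩ ⟨⟨x, hx, rfl⟩, hv⟩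
    exact hpos x hx v (by
      intro h0
      rw [mem_sphere_iff_norm, sub_zero] at hv
      rw [h0] at hv; simp at hv)
  obtain ⟨δ, hδ0, hδ⟩ := hK.exists_thickening_subset_open hU hKU
  refine ⟨δ, hδ0, fun x hx p hp v hv => ?_⟩
  have hn : ‖v‖ ≠ 0 := norm_ne_zero_iff.mpr hv
  set u := ‖v‖⁻¹ • v with hu
  have hunorm : u ∈ Metric.sphere (0 : ℝ × ℝ) 1 := by
    rw [mem_sphere_iff_norm, sub_zero, hu, norm_smul]
    simp [abs_of_nonneg (inv_nonneg.mpr (norm_nonneg v)), inv_mul_cancel₀ hn]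
  have hmem : ((p, u) : (ℝ × ℝ × ℝ) × (ℝ × ℝ)) ∈ Metric.thickening δ
      ((c '' Icc 0 1) ×ˢ (Metric.sphere (0 : ℝ × ℝ) 1)) := by
    rw [Metric.mem_thickening_iff]
    refine ⟨(c x, u), ⟨⟨x, hx, rfl⟩, hunorm⟩, ?_⟩
    rw [Prod.dist_eq]
    rw [dist_self, max_eq_left dist_nonneg]; exact hp
  have hQu : 0 < Qf f p u := hδ hmem
  have hveq : v = ‖v‖ • u := by rw [hu, smul_inv_smul₀ hn]
  calc (0:ℝ) < ‖v‖ ^ 2 * Qf f p u := by positivity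
    _ = Qf f p v := by rw [← Qf_smul, ← hveq]

theorem convex_gap_pos (hf : ContDiff ℝ 2 (Fn f)) (q0 : ℝ × ℝ × ℝ) (Δ : ℝ × ℝ)     (hQ : ∀ t ∈ Icc (0:ℝ) 1, 0 < Qf f (q0 + t • ((Δ.1, Δ.2, 0) : ℝ × ℝ × ℝ)) Δ) :
    0 < Fn f (q0 + ((Δ.1, Δ.2, 0) : ℝ × ℝ × ℝ)) - Fn f q0
        - fderiv ℝ (Fn f) q0 ((Δ.1, Δ.2, 0) : ℝ × ℝ × ℝ) := by
  set w : ℝ × ℝ × ℝ := (Δ.1, Δ.2, 0) with hw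
  set φ' : ℝ → ℝ := fun t => fderiv ℝ (Fn f) (q0 + t • w) w with hφ'def
  have hφ : ∀ t : ℝ, HasDerivAt (fun s => Fn f (q0 + s • w)) (φ' t) t :=
    fun t => hasDerivAt_line hf q0 w t
  have hφ' : ∀ t : ℝ, HasDerivAt φ' (Qf f (q0 + t • w) Δ) t := fun t =>
    hasDerivAt_fderiv_line hf q0 w w t
  have hmono : StrictMonoOn φ' (Icc 0 1) := by
    apply strictMonoOn_of_deriv_pos (convex_Icc 0 1)
    · exact fun t _ => (hφ' t).continuousAt.continuousWithinAt
    · intro t ht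
      rw [interior_Icc] at ht
      rw [(hφ' t).deriv]
      exact hQ t (Ioo_subset_Icc_self ht)
  set ψ : ℝ → ℝ := fun t => Fn f (q0 + t • w) - Fn f q0 - t * φ' 0 with hψdef
  have hψ : ∀ t : ℝ, HasDerivAt ψ (φ' t - φ' 0) t := by
    intro t
    exact (((hφ t).sub_const _).sub ((hasDerivAt_id t).mul_const (φ' 0))).congr_deriv (by simp)
  have hψmono : StrictMonoOn ψ (Icc 0 1) := by
    apply strictMonoOn_of_deriv_pos (convex_Icc 0 1)
    · exact fun t _ => (hψ t).continuousAt.continuousWithinAt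
    · intro t ht
      rw [interior_Icc] at ht
      rw [(hψ t).deriv]
      have := hmono (left_mem_Icc.mpr zero_le_one) (Ioo_subset_Icc_self ht) ht.1
      linarith
  have h01 := hψmono (left_mem_Icc.mpr zero_le_one) (right_mem_Icc.mpr zero_le_one) zero_lt_one
  have hψ0 : ψ 0 = 0 := by simp [hψdef]
  have hψ1 : ψ 1 = Fn f (q0 + w) - Fn f q0 - fderiv ℝ (Fn f) q0 w := by
    simp [hψdef, hφ'def]
  rw [hψ0, hψ1] at h01
  exact h01
end SLM

open SLM MeasureTheory in
/-- The trivial second-order sufficient condition: if `y*` satisfies the Euler equation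
and the 2×2 Hessian `∇²_z f(z,x)` at `z = (y*'(x), y*(x))` is positive definite for every
`x ∈ [0,1]`, then `y*` is a strict local minimizer of `F(y) = ∫₀¹ f(y', y, x) dx` over
`C¹₀` in the C¹ max-norm. -/
theorem strict_local_min_of_pointwise_hessian
    (f : ℝ → ℝ → ℝ → ℝ)
    (hf : ContDiff ℝ 2 (fun p : ℝ × ℝ × ℝ => f p.1 p.2.1 p.2.2))
    (y yd : ℝ → ℝ)
    (hy : ∀ x ∈ Icc (0:ℝ) 1, HasDerivAt y (yd x) x)
    (hydc : ContinuousOn yd (Icc 0 1))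
    (hy0 : y 0 = 0) (hy1 : y 1 = 0)
    (euler : ∀ x ∈ Icc (0:ℝ) 1,
      HasDerivAt (fun s => deriv (fun t => f t (y s) s) (yd s))
        (deriv (fun t => f (yd x) t x) (y x)) x)
    (hess : ∀ x ∈ Icc (0:ℝ) 1, ∀ v : ℝ × ℝ, v ≠ 0 →
      0 < deriv (fun a => deriv (fun t => f t (y x) x) a) (yd x) * v.1 ^ 2
        + 2 * deriv (fun b => deriv (fun t => f t b x) (yd x)) (y x) * v.1 * v.2
        + deriv (fun b => deriv (fun t => f (yd x) t x) b) (y x) * v.2 ^ 2) :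
    ∃ ε > (0:ℝ), ∀ z zd : ℝ → ℝ,
      (∀ x ∈ Icc (0:ℝ) 1, HasDerivAt z (zd x) x) →
      ContinuousOn zd (Icc 0 1) →
      z 0 = 0 → z 1 = 0 →
      (∀ x ∈ Icc (0:ℝ) 1, |z x - y x| ≤ ε ∧ |zd x - yd x| ≤ ε) →
      (∃ x ∈ Icc (0:ℝ) 1, z x ≠ y x) →
      (∫ x in (0:ℝ)..1, f (yd x) (y x) x) < ∫ x in (0:ℝ)..1, f (zd x) (z x) x := by
  have hfF : ContDiff ℝ 2 (Fn f) := hf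
  set c : ℝ → ℝ × ℝ × ℝ := fun x => (yd x, y x, x) with hc
  set P : ℝ → ℝ := fun x => fderiv ℝ (Fn f) (c x) (1, 0, 0) with hP
  set Qc : ℝ → ℝ := fun x => fderiv ℝ (Fn f) (c x) (0, 1, 0) with hQc
  have hyc : ContinuousOn y (Icc 0 1) := fun x hx => (hy x hx).continuousAt.continuousWithinAt
  have hcc : ContinuousOn c (Icc 0 1) :=
    hydc.prodMk (hyc.prodMk continuousOn_id)
  -- positive definiteness along the curve
  have hpos : ∀ x ∈ Icc (0:ℝ) 1, ∀ v : ℝ × ℝ, v ≠ 0 → 0 < Qf f (c x) v := by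
    intro x hx v hv
    rw [hc, Qf_eq_hess hfF]
    exact hess x hx v hv
  obtain ⟨δ, hδ0, hδ⟩ := tube hfF c hcc hpos
  refine ⟨δ / 2, by linarith, fun z zd hz hzdc hz0 hz1 hclose hne => ?_⟩
  obtain ⟨x0, hx0, hx0ne⟩ := hne
  set h : ℝ → ℝ := fun x => z x - y x with hh
  set hd : ℝ → ℝ := fun x => zd x - yd x with hhd
  set E : ℝ → ℝ := fun x => Qc x * h x + P x * hd x with hE
  set gap : ℝ → ℝ := fun x => f (zd x) (z x) x - f (yd x) (y x) x - E x with hgap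
  -- continuity facts
  have hzc : ContinuousOn z (Icc 0 1) := fun x hx => (hz x hx).continuousAt.continuousWithinAt
  have hhc : ContinuousOn h (Icc 0 1) := hzc.sub hyc
  have hhdc : ContinuousOn hd (Icc 0 1) := hzdc.sub hydc
  -- Euler / first-variation facts
  have hPd : ∀ x ∈ Icc (0:ℝ) 1, HasDerivAt P (Qc x) x := by
    intro x hx
    have he := euler x hx
    have hfun : (fun s => deriv (fun t => f t (y s) s) (yd s)) = P := by
      funext s
      rw [deriv_slice1 hfF (yd s) (y s) s]
    rw [hfun, deriv_slice2 hfF] at he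
    exact he
  have hPc : ContinuousOn P (Icc 0 1) :=
    fun x hx => (hPd x hx).continuousAt.continuousWithinAt
  have hQcc : ContinuousOn Qc (Icc 0 1) := by
    exact (((contDiff_fderivF hfF).continuous.comp_continuousOn hcc).clm_apply
      continuousOn_const)
  have hEc : ContinuousOn E (Icc 0 1) := (hQcc.mul hhc).add (hPc.mul hhdc)
  have hIcc : uIcc (0:ℝ) 1 = Icc 0 1 := uIcc_of_le zero_le_one
  -- the first variation integrates to zero
  have hEint : IntervalIntegrable E volume 0 1 := by
    apply ContinuousOn.intervalIntegrable; rwa [hIcc]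
  have hEzero : (∫ x in (0:ℝ)..1, E x) = 0 := by
    have hΦ : ∀ x ∈ uIcc (0:ℝ) 1, HasDerivAt (fun s => P s * h s) (E x) x := by
      intro x hx
      rw [hIcc] at hx
      exact (hPd x hx).mul ((hz x hx).sub (hy x hx))
    rw [intervalIntegral.integral_eq_sub_of_hasDerivAt hΦ hEint]
    simp [hh, hy0, hy1, hz0, hz1]
  -- pointwise convexity gap
  have hgapkey : ∀ x ∈ Icc (0:ℝ) 1, 0 ≤ gap x ∧ ((hd x, h x) ≠ (0:ℝ × ℝ) → 0 < gap x) := by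
    intro x hx
    by_cases hΔ : ((hd x, h x) : ℝ × ℝ) = 0
    · have h1 : z x - y x = 0 := by simpa [hh] using congrArg Prod.snd hΔ
      have h2 : zd x - yd x = 0 := by simpa [hhd] using congrArg Prod.fst hΔ
      have hz' : z x = y x := by linarith
      have hzd' : zd x = yd x := by linarith
      have hgap0 : gap x = 0 := by
        simp only [hgap, hE, hh, hhd]
        rw [hz', hzd']
        ring
      exact ⟨le_of_eq hgap0.symm, fun hcon => absurd hΔ hcon⟩
    · have key : 0 < Fn f (c x + ((hd x, h x, 0) : ℝ × ℝ × ℝ)) - Fn f (c x)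
          - fderiv ℝ (Fn f) (c x) ((hd x, h x, 0) : ℝ × ℝ × ℝ) := by
        apply convex_gap_pos hfF (c x) ((hd x, h x) : ℝ × ℝ)
        intro t ht
        apply hδ x hx _ _ _ hΔ
        rw [dist_self_add_left, norm_smul]
        have hw : ‖((hd x, h x, 0) : ℝ × ℝ × ℝ)‖ ≤ δ / 2 := by
          rw [Prod.norm_def, Prod.norm_def]
          obtain ⟨hc1, hc2⟩ := hclose x hx
          simp only [Real.norm_eq_abs, norm_zero]
          apply max_le
          · simpa [hhd] using hc2
          · apply max_le
            · simpa [hh] using hc1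
            · linarith
        have ht' : |t| ≤ 1 := by rw [abs_of_nonneg ht.1]; exact ht.2
        calc |t| * ‖((hd x, h x, 0) : ℝ × ℝ × ℝ)‖ ≤ 1 * (δ / 2) :=
              mul_le_mul ht' hw (norm_nonneg _) zero_le_one
          _ < δ := by linarith
      have hsum : c x + ((hd x, h x, 0) : ℝ × ℝ × ℝ) = (zd x, z x, x) := by
        simp only [hc, hh, hhd, Prod.mk_add_mk, Prod.mk.injEq]
        refine ⟨by ring, by ring, by ring⟩
      have hlin : fderiv ℝ (Fn f) (c x) ((hd x, h x, 0) : ℝ × ℝ × ℝ) = E x := by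
        have hv : ((hd x, h x, (0:ℝ)) : ℝ × ℝ × ℝ)
            = hd x • ((1:ℝ), (0:ℝ), (0:ℝ)) + h x • ((0:ℝ), (1:ℝ), (0:ℝ)) := by
          simp [Prod.ext_iff]
        rw [hv]
        simp only [map_add, _root_.map_smul, smul_eq_mul, hE, hP, hQc]
        ring
      have hgx : gap x = Fn f (c x + ((hd x, h x, 0) : ℝ × ℝ × ℝ)) - Fn f (c x)
          - fderiv ℝ (Fn f) (c x) ((hd x, h x, 0) : ℝ × ℝ × ℝ) := by
        rw [hsum, hlin]
        simp only [hgap, hc, Fn]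
      rw [← hgx] at key
      exact ⟨le_of_lt key, fun _ => key⟩
  -- integrability
  have hFz : ContinuousOn (fun x => f (zd x) (z x) x) (Icc 0 1) :=
    (diffF hfF).continuous.comp_continuousOn (hzdc.prodMk (hzc.prodMk continuousOn_id))
  have hFy : ContinuousOn (fun x => f (yd x) (y x) x) (Icc 0 1) :=
    (diffF hfF).continuous.comp_continuousOn hcc
  have hgapc : ContinuousOn gap (Icc 0 1) := (hFz.sub hFy).sub hEc
  have hgapint : IntervalIntegrable gap volume 0 1 := by
    apply ContinuousOn.intervalIntegrable; rwa [hIcc]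
  have hFzint : IntervalIntegrable (fun x => f (zd x) (z x) x) volume 0 1 := by
    apply ContinuousOn.intervalIntegrable; rwa [hIcc]
  have hFyint : IntervalIntegrable (fun x => f (yd x) (y x) x) volume 0 1 := by
    apply ContinuousOn.intervalIntegrable; rwa [hIcc]
  -- positivity of the gap integral
  have hgappos : 0 < ∫ x in (0:ℝ)..1, gap x := by
    have hgapx0 : 0 < gap x0 := by
      refine (hgapkey x0 hx0).2 ?_
      intro hcon
      have h1 : z x0 - y x0 = 0 := by simpa [hh] using congrArg Prod.snd hcon
      exact hx0ne (by linarith)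
    have hev : ∀ᶠ t in nhdsWithin x0 (Icc 0 1), 0 < gap t :=
      (hgapc x0 hx0).eventually (eventually_gt_nhds hgapx0)
    obtain ⟨η, hη0, hball⟩ := Metric.mem_nhdsWithin_iff.mp hev
    set a : ℝ := max 0 (x0 - η) with ha
    set b : ℝ := min 1 (x0 + η) with hb
    have hab : a < b := by
      obtain ⟨hx01, hx02⟩ := hx0
      apply max_lt <;> apply lt_min <;> linarith
    have hsub : Ioo a b ⊆ Function.support gap ∩ Ioc 0 1 := by
      intro t ht
      have h0t : 0 ≤ a := le_max_left _ _
      have hta : x0 - η ≤ a := le_max_right _ _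
      have htb : b ≤ 1 := min_le_left _ _
      have htb2 : b ≤ x0 + η := min_le_right _ _
      have htIcc : t ∈ Icc (0:ℝ) 1 := ⟨by linarith [ht.1], by linarith [ht.2]⟩
      have htball : dist t x0 < η := by
        rw [Real.dist_eq, abs_sub_lt_iff]
        constructor <;> linarith [ht.1, ht.2]
      have := hball ⟨Metric.mem_ball.mpr htball, htIcc⟩
      exact ⟨Function.mem_support.mpr (ne_of_gt this), ⟨by linarith [ht.1], by linarith [ht.2]⟩⟩
    have hae : 0 ≤ᵐ[volume.restrict (uIoc (0:ℝ) 1)] gap := by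
      rw [uIoc_of_le (zero_le_one' ℝ)]
      exact ae_restrict_of_forall_mem measurableSet_Ioc
        (fun t ht => (hgapkey t (Ioc_subset_Icc_self ht)).1)
    rw [intervalIntegral.integral_pos_iff_support_of_nonneg_ae' hae hgapint]
    refine ⟨zero_lt_one, lt_of_lt_of_le ?_ (measure_mono hsub)⟩
    rw [Real.volume_Ioo]
    exact ENNReal.ofReal_pos.mpr (by linarith)
  -- put it together
  have hsplit : (fun x => f (zd x) (z x) x)
      = fun x => f (yd x) (y x) x + (E x + gap x) := by
    funext x
    rw [hgap]
    ring
  calc (∫ x in (0:ℝ)..1, f (yd x) (y x) x)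
      < (∫ x in (0:ℝ)..1, f (yd x) (y x) x) + ((∫ x in (0:ℝ)..1, E x)
          + ∫ x in (0:ℝ)..1, gap x) := by rw [hEzero]; linarith
    _ = ∫ x in (0:ℝ)..1, f (zd x) (z x) x := by
        rw [hsplit, intervalIntegral.integral_add hFyint (hEint.add hgapint),
          intervalIntegral.integral_add hEint hgapint]
end

section
/- Let f be C² and let y* ∈ C¹₀ satisfy the Euler equation. Define P(x) = f_{y'y'}(y*'(x), y*(x), x) and Q(x) = f_{yy}(y*'(x), y*(x), x) - d/dx[f_{y'y}(y*'(x), y*(x), x)]. Assume P ∈ C¹ with P(x) > 0 on [0,1] and x ↦ f_{y'y}(y*'(x), y*(x), x) is C¹. If the solution u of (P u')' = Q u with u(0) = 0, u'(0) = 1 satisfies u(x) > 0 for all x ∈ (0,1], then y* is a strict local minimizer of F(y) = ∫₀¹ f(y',y,x) dx over C¹₀ in the C¹ max-norm. -/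
set_option maxHeartbeats 1000000

open Set MeasureTheory intervalIntegral Filter Topology


private lemma ftc' {g g' : ℝ → ℝ} {a b : ℝ} (hab : a ≤ b) (hc : ContinuousOn g (Icc a b))
    (hd : ∀ x ∈ Ioo a b, HasDerivAt g (g' x) x)
    (hi : IntervalIntegrable g' volume a b) :
    ∫ x in a..b, g' x = g b - g a :=
  integral_eq_sub_of_hasDeriv_right_of_le hab hc (fun x hx => (hd x hx).hasDerivWithinAt) hi

private lemma contOn_ii {f : ℝ → ℝ} {a b : ℝ} (hab : a ≤ b) (hf : ContinuousOn f (Icc a b)) :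
    IntervalIntegrable f volume a b :=
  ContinuousOn.intervalIntegrable (by rwa [uIcc_of_le hab])

/-- Cauchy-Schwarz for interval integrals of continuous functions. -/
private lemma cs_integral {f g : ℝ → ℝ} {a b : ℝ} (hab : a ≤ b)
    (hf : ContinuousOn f (Icc a b)) (hg : ContinuousOn g (Icc a b)) :
    (∫ x in a..b, f x * g x) ^ 2 ≤ (∫ x in a..b, f x ^ 2) * ∫ x in a..b, g x ^ 2 := by
  set A := ∫ x in a..b, f x ^ 2 with hA
  set B := ∫ x in a..b, f x * g x with hB
  set C := ∫ x in a..b, g x ^ 2 with hC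
  have hfi : IntervalIntegrable (fun x => f x ^ 2) volume a b := contOn_ii hab (hf.pow 2)
  have hgi : IntervalIntegrable (fun x => g x ^ 2) volume a b := contOn_ii hab (hg.pow 2)
  have hfgi : IntervalIntegrable (fun x => f x * g x) volume a b := contOn_ii hab (hf.mul hg)
  have key : ∀ l : ℝ, 0 ≤ A - 2 * l * B + l ^ 2 * C := by
    intro l
    have h0 : 0 ≤ ∫ x in a..b, (f x - l * g x) ^ 2 := by
      apply integral_nonneg hab; intro x _; positivity
    have hexp : (∫ x in a..b, (f x - l * g x) ^ 2)
        = A - 2 * l * B + l ^ 2 * C := by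
      have h1 : ∀ x, (f x - l * g x) ^ 2
          = (f x ^ 2 - 2 * l * (f x * g x)) + l ^ 2 * g x ^ 2 := fun x => by ring
      simp_rw [h1]
      rw [integral_add (hfi.sub (hfgi.const_mul _)) (hgi.const_mul _),
        integral_sub hfi (hfgi.const_mul _), intervalIntegral.integral_const_mul, intervalIntegral.integral_const_mul]
    linarith [hexp ▸ h0]
  have hC0 : 0 ≤ C := integral_nonneg hab (fun x _ => by positivity)
  rcases eq_or_lt_of_le hC0 with h | h
  · have hB0 : B = 0 := by
      by_contra hB0
      have h2 : 2 * ((A + 1) / (2 * B)) * B = A + 1 := by field_simp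
      have := key ((A + 1) / (2 * B))
      rw [← h, h2] at this; linarith
    rw [hB0, ← h]; norm_num
  · have := key (B / C)
    have h2 : A - 2 * (B / C) * B + (B / C) ^ 2 * C = A - B ^ 2 / C := by
      field_simp; ring
    rw [h2, sub_nonneg, div_le_iff₀ h] at this
    linarith

private lemma linear_lower {u u' : ℝ → ℝ}
    (hu : ∀ x ∈ Icc (0:ℝ) 1, HasDerivAt u (u' x) x)
    (hu0 : u 0 = 0) (hu1 : u' 0 = 1)
    (hupos : ∀ x ∈ Ioc (0:ℝ) 1, 0 < u x) :
    ∃ c > (0:ℝ), ∀ x ∈ Icc (0:ℝ) 1, c * x ≤ u x := by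
  have hd : HasDerivAt u 1 0 := hu1 ▸ hu 0 ⟨le_rfl, zero_le_one⟩
  have hslope := hasDerivAt_iff_tendsto_slope.mp hd
  have hev : ∀ᶠ x in 𝓝[≠] (0:ℝ), 1/2 < slope u 0 x :=
    hslope.eventually (eventually_gt_nhds (by norm_num))
  have hev2 : ∀ᶠ x in 𝓝[>] (0:ℝ), 1/2 < slope u 0 x :=
    hev.filter_mono (nhdsWithin_mono 0 (fun x hx => ne_of_gt hx))
  obtain ⟨t, ht0, hsub⟩ := mem_nhdsGT_iff_exists_Ioc_subset.mp hev2
  have ht0' : (0:ℝ) < t := ht0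
  set t' := min t 1 with ht'
  have ht'0 : 0 < t' := lt_min ht0' one_pos
  have ht'1 : t' ≤ 1 := min_le_right _ _
  have hIsub : Icc t' 1 ⊆ Icc 0 1 := Icc_subset_Icc ht'0.le le_rfl
  have hucont : ContinuousOn u (Icc t' 1) :=
    fun x hx => ((hu x (hIsub hx)).continuousAt).continuousWithinAt
  obtain ⟨x₀, hx₀, hmin⟩ :=
    isCompact_Icc.exists_isMinOn (nonempty_Icc.mpr ht'1) hucont
  have hμ : 0 < u x₀ := hupos x₀ ⟨lt_of_lt_of_le ht'0 hx₀.1, hx₀.2⟩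
  refine ⟨min (1/2) (u x₀), lt_min (by norm_num) hμ, ?_⟩
  intro x hx
  rcases eq_or_lt_of_le hx.1 with h0 | h0
  · simp [← h0, hu0]
  rcases le_or_gt x t' with hxt | hxt
  · have hs : 1/2 < slope u 0 x := hsub ⟨h0, le_trans hxt (min_le_left _ _)⟩
    rw [slope_def_field, hu0, sub_zero, sub_zero] at hs
    have h2 : 1/2 * x < u x := by
      rw [lt_div_iff₀ h0] at hs; linarith [hs]
    calc min (1/2) (u x₀) * x ≤ 1/2 * x :=
          mul_le_mul_of_nonneg_right (min_le_left _ _) h0.le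
      _ ≤ u x := h2.le
  · have hmem : x ∈ Icc t' 1 := ⟨hxt.le, hx.2⟩
    have hge : u x₀ ≤ u x := hmin hmem
    calc min (1/2) (u x₀) * x ≤ u x₀ * 1 :=
          mul_le_mul (min_le_right _ _) hx.2 h0.le hμ.le
      _ ≤ u x := by simpa using hge

private lemma jacobi_bound {P Q u u' : ℝ → ℝ}
    (hPc : ContinuousOn P (Icc 0 1)) (hQc : ContinuousOn Q (Icc 0 1))
    (hPpos : ∀ x ∈ Icc (0:ℝ) 1, 0 < P x)
    (hu : ∀ x ∈ Icc (0:ℝ) 1, HasDerivAt u (u' x) x)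
    (hu'c : ContinuousOn u' (Icc 0 1))
    (hode : ∀ x ∈ Icc (0:ℝ) 1, HasDerivAt (fun s => P s * u' s) (Q x * u x) x)
    (hu0 : u 0 = 0) (hu1 : u' 0 = 1)
    (hupos : ∀ x ∈ Ioc (0:ℝ) 1, 0 < u x) :
    ∃ δ > (0:ℝ), ∀ h h' : ℝ → ℝ, ∀ N : ℝ,
      (∀ x ∈ Icc (0:ℝ) 1, HasDerivAt h (h' x) x) →
      ContinuousOn h' (Icc 0 1) →
      h 0 = 0 → h 1 = 0 →
      (∀ x ∈ Icc (0:ℝ) 1, |h' x| ≤ N) →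
      δ * ∫ x in (0:ℝ)..1, h' x ^ 2
        ≤ ∫ x in (0:ℝ)..1, (P x * h' x ^ 2 + Q x * h x ^ 2) := by
  obtain ⟨c, hc0, hcu⟩ := linear_lower hu hu0 hu1 hupos
  have hucont : ContinuousOn u (Icc 0 1) :=
    fun x hx => (hu x hx).continuousAt.continuousWithinAt
  obtain ⟨Mu, hMu⟩ := isCompact_Icc.exists_bound_of_continuousOn hucont
  obtain ⟨Mu', hMu'⟩ := isCompact_Icc.exists_bound_of_continuousOn hu'c
  set M := max 1 (max Mu Mu') with hM
  have hM1 : (1:ℝ) ≤ M := le_max_left _ _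
  have hMub : ∀ x ∈ Icc (0:ℝ) 1, |u x| ≤ M :=
    fun x hx => le_trans (hMu x hx) (le_trans (le_max_left _ _) (le_max_right _ _))
  have hMu'b : ∀ x ∈ Icc (0:ℝ) 1, |u' x| ≤ M :=
    fun x hx => le_trans (hMu' x hx) (le_trans (le_max_right _ _) (le_max_right _ _))
  obtain ⟨p₁, hp₁⟩ := isCompact_Icc.exists_bound_of_continuousOn hPc
  obtain ⟨q₁, hq₁⟩ := isCompact_Icc.exists_bound_of_continuousOn hQc
  have hp₁0 : 0 ≤ p₁ := le_trans (norm_nonneg _) (hp₁ 0 ⟨le_rfl, zero_le_one⟩)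
  have hq₁0 : 0 ≤ q₁ := le_trans (norm_nonneg _) (hq₁ 0 ⟨le_rfl, zero_le_one⟩)
  obtain ⟨xP, hxP, hPmin⟩ :=
    isCompact_Icc.exists_isMinOn (nonempty_Icc.mpr zero_le_one) hPc
  set p₀ := P xP with hp₀def
  have hp₀ : 0 < p₀ := hPpos xP hxP
  have hp₀le : ∀ x ∈ Icc (0:ℝ) 1, p₀ ≤ P x := fun x hx => hPmin hx
  set K := 8 * M ^ 2 / c ^ 2 + 2 with hKdef
  have hK : 0 < K := by positivity
  refine ⟨p₀ / K, by positivity, ?_⟩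
  intro h h' N hh hh'c h0 h1 hN
  have hN0 : 0 ≤ N := le_trans (abs_nonneg _) (hN 0 ⟨le_rfl, zero_le_one⟩)
  have hhcont : ContinuousOn h (Icc 0 1) :=
    fun x hx => (hh x hx).continuousAt.continuousWithinAt
  -- |h x| ≤ N * x on [0,1]
  have hhb : ∀ x ∈ Icc (0:ℝ) 1, |h x| ≤ N * x := by
    intro x hx
    have hIs : Icc (0:ℝ) x ⊆ Icc 0 1 := Icc_subset_Icc le_rfl hx.2
    have hfx : ∫ t in (0:ℝ)..x, h' t = h x - h 0 :=
      ftc' hx.1 (hhcont.mono hIs)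
        (fun s hs => hh s (hIs (Ioo_subset_Icc_self hs)))
        (contOn_ii hx.1 (hh'c.mono hIs))
    rw [h0, sub_zero] at hfx
    have := norm_integral_le_of_norm_le_const (a := 0) (b := x) (C := N) (f := h')
      (fun t ht => by
        rw [uIoc_of_le hx.1] at ht
        exact hN t ⟨ht.1.le, le_trans ht.2 hx.2⟩)
    rw [hfx] at this
    simpa [abs_of_nonneg hx.1] using this
  have hhb1 : ∀ x ∈ Icc (0:ℝ) 1, |h x| ≤ N := fun x hx =>
    le_trans (hhb x hx) (by nlinarith [hx.2, hN0])
  obtain ⟨w, hwdef⟩ : ∃ w : ℝ → ℝ, w = fun x => (h' x * u x - h x * u' x) / (u x) ^ 2 :=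
    ⟨_, rfl⟩
  have hwx : ∀ x, w x = (h' x * u x - h x * u' x) / (u x) ^ 2 := fun x => by rw [hwdef]
  set I1 := ∫ x in (0:ℝ)..1, h' x ^ 2 with hI1
  set A := ∫ x in (0:ℝ)..1, (P x * h' x ^ 2 + Q x * h x ^ 2) with hA
  set CC := (p₀ / K + p₁ + q₁ + p₁ * M / c) * N ^ 2 with hCC
  have hCC0 : 0 ≤ CC := by positivity
  have main : ∀ a ∈ Ioo (0:ℝ) 1, p₀ / K * I1 ≤ A + a * CC := by
    intro a ha
    have ha0 : 0 < a := ha.1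
    have ha1 : a ≤ 1 := ha.2.le
    have hIa : Icc a 1 ⊆ Icc (0:ℝ) 1 := Icc_subset_Icc ha0.le le_rfl
    have hupos' : ∀ x ∈ Icc a 1, 0 < u x :=
      fun x hx => hupos x ⟨lt_of_lt_of_le ha0 hx.1, hx.2⟩
    have hune : ∀ x ∈ Icc a 1, u x ≠ 0 := fun x hx => (hupos' x hx).ne'
    have hwc : ContinuousOn w (Icc a 1) := by
      rw [hwdef]
      apply ContinuousOn.div
      · exact ((hh'c.mono hIa).mul (hucont.mono hIa)).sub
          ((hhcont.mono hIa).mul (hu'c.mono hIa))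
      · exact (hucont.mono hIa).pow 2
      · exact fun x hx => pow_ne_zero 2 (hune x hx)
    have hwabsc : ContinuousOn (fun x => |w x|) (Icc a 1) := hwc.abs
    obtain ⟨η, hηdef⟩ : ∃ η : ℝ → ℝ, η = fun x => h x / u x := ⟨_, rfl⟩
    have hηx : ∀ x, η x = h x / u x := fun x => by rw [hηdef]
    have hηc : ContinuousOn η (Icc a 1) := by
      rw [hηdef]; exact (hhcont.mono hIa).div (hucont.mono hIa) hune
    have hηd : ∀ s ∈ Ioo (0:ℝ) 1, HasDerivAt η (w s) s := by
      intro s hs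
      have hsI : s ∈ Icc (0:ℝ) 1 := ⟨hs.1.le, hs.2.le⟩
      have hus : u s ≠ 0 := (hupos s ⟨hs.1, hs.2.le⟩).ne'
      rw [hηdef, hwx]
      exact (hh s hsI).div (hu s hsI) hus
    obtain ⟨G, hGdef⟩ : ∃ G : ℝ → ℝ, G = fun x => ∫ t in x..1, |w t| := ⟨_, rfl⟩
    have hG1 : G 1 = 0 := by rw [hGdef]; simp
    have hGc : ContinuousOn G (Icc a 1) := by
      have hint : IntegrableOn (fun t => |w t|) (uIcc a 1) volume := by
        rw [uIcc_of_le ha1]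
        exact hwabsc.integrableOn_compact isCompact_Icc
      have := continuousOn_primitive_interval_left hint
      rw [uIcc_of_le ha1] at this
      rw [hGdef]; exact this
    have hGd : ∀ x ∈ Ioo a 1, HasDerivAt G (-|w x|) x := by
      intro x hx
      have hx01 : x ∈ Ioo (0:ℝ) 1 := ⟨lt_trans ha0 hx.1, hx.2⟩
      have hwcont : ∀ s ∈ Ioo (0:ℝ) 1, ContinuousAt (fun t => |w t|) s := by
        intro s hs
        have hmem : Icc (0:ℝ) 1 ∈ 𝓝 s := Icc_mem_nhds hs.1 hs.2
        have hsI : s ∈ Icc (0:ℝ) 1 := ⟨hs.1.le, hs.2.le⟩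
        have hus : u s ≠ 0 := (hupos s ⟨hs.1, hs.2.le⟩).ne'
        have hcw : ContinuousAt w s := by
          rw [hwdef]
          apply ContinuousAt.div
          · exact ((hh'c.continuousAt hmem).mul ((hu s hsI).continuousAt)).sub
              (((hh s hsI).continuousAt).mul (hu'c.continuousAt hmem))
          · exact ((hu s hsI).continuousAt).pow 2
          · exact pow_ne_zero 2 hus
        exact hcw.abs
      have hxa : Icc x 1 ⊆ Icc a 1 := Icc_subset_Icc hx.1.le le_rfl
      have hii : IntervalIntegrable (fun t => |w t|) volume 1 x :=
        (contOn_ii hx.2.le (hwabsc.mono hxa)).symm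
      have hms : StronglyMeasurableAtFilter (fun t => |w t|) (𝓝 x) volume :=
        ContinuousAt.stronglyMeasurableAtFilter isOpen_Ioo hwcont x hx01
      have hd := intervalIntegral.integral_hasDerivAt_right hii hms (hwcont x hx01)
      have hGalt : G = fun y => -∫ t in (1:ℝ)..y, |w t| := by
        rw [hGdef]
        funext v
        exact integral_symm 1 v
      rw [hGalt]
      exact hd.neg
    have hηeq : ∀ x ∈ Icc a 1, η x = - ∫ t in x..1, w t := by
      intro x hx
      have hxI : Icc x 1 ⊆ Icc a 1 := Icc_subset_Icc hx.1 le_rfl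
      have hftc := ftc' hx.2 (hηc.mono hxI)
        (fun s hs => hηd s ⟨lt_trans ha0 (lt_of_le_of_lt hx.1 hs.1), hs.2⟩)
        (contOn_ii hx.2 (hwc.mono hxI))
      have hη1 : η 1 = 0 := by rw [hηx, h1]; simp
      rw [hη1] at hftc
      linarith [hftc]
    have hηG : ∀ x ∈ Icc a 1, |η x| ≤ G x := by
      intro x hx
      rw [hηeq x hx, abs_neg, hGdef]
      exact abs_integral_le_integral_abs hx.2
    set X := ∫ x in a..1, G x ^ 2 with hXdef
    set B := ∫ x in a..1, G x * (x * |w x|) with hBdef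
    set Y := ∫ x in a..1, x ^ 2 * w x ^ 2 with hYdef
    set Z := ∫ x in a..1, (u x * w x) ^ 2 with hZdef
    have hX0 : 0 ≤ X := integral_nonneg ha1 (fun x _ => sq_nonneg _)
    have hY0 : 0 ≤ Y := integral_nonneg ha1 (fun x _ => by positivity)
    have hZ0 : 0 ≤ Z := integral_nonneg ha1 (fun x _ => sq_nonneg _)
    have hidc : ContinuousOn (fun x : ℝ => x) (Icc a 1) := continuous_id.continuousOn
    have iiG2 : IntervalIntegrable (fun x => G x ^ 2) volume a 1 := contOn_ii ha1 (hGc.pow 2)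
    have iiGXW : IntervalIntegrable (fun x => G x * (x * |w x|)) volume a 1 :=
      contOn_ii ha1 (hGc.mul (hidc.mul hwabsc))
    -- Hardy inequality : X ≤ 4 * Y
    have hXB : X ≤ 2 * B := by
      have hSd : ∀ x ∈ Ioo a 1,
          HasDerivAt (fun s => s * G s ^ 2) (G x ^ 2 - 2 * (G x * (x * |w x|))) x := by
        intro x hx
        have := (hasDerivAt_id x).mul ((hGd x hx).pow 2)
        refine this.congr_deriv ?_
        simp only [id_eq, Pi.pow_apply]
        generalize G x = gg
        generalize |w x| = t
        ring
      have hftcS := ftc' ha1 (hidc.mul (hGc.pow 2)) hSd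
        (iiG2.sub (iiGXW.const_mul 2))
      have hq : ∫ x in a..1, (G x ^ 2 - 2 * (G x * (x * |w x|))) = X - 2 * B := by
        rw [integral_sub iiG2 (iiGXW.const_mul 2), intervalIntegral.integral_const_mul]
      rw [hq] at hftcS
      simp only [Pi.mul_apply, Pi.pow_apply, hG1] at hftcS
      have haG : 0 ≤ a * G a ^ 2 := mul_nonneg ha0.le (sq_nonneg _)
      have : X - 2 * B = 1 * 0 ^ 2 - a * G a ^ 2 := hftcS
      nlinarith [this, haG]
    have hCS : B ^ 2 ≤ X * Y := by
      have hcs := cs_integral ha1 hGc (hidc.mul hwabsc)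
      have hcongr : (∫ x in a..1, (x * |w x|) ^ 2) = Y := by
        apply integral_congr
        intro x _
        simp [mul_pow, sq_abs]
      simp only [Pi.mul_apply] at hcs
      rwa [hcongr] at hcs
    have hX4Y : X ≤ 4 * Y := by nlinarith [hXB, hCS, hX0, hY0]
    -- pointwise decomposition of h'
    have hpt : ∀ x ∈ Icc a 1, h' x ^ 2 ≤ 2 * (M ^ 2 * G x ^ 2) + 2 * (u x * w x) ^ 2 := by
      intro x hx
      have hux : u x ≠ 0 := hune x hx
      have hid2 : h' x = u' x * η x + u x * w x := by
        rw [hηx, hwx]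
        field_simp
        ring
      have hb1 : |u' x| ≤ M := hMu'b x (hIa hx)
      have hb2 : |η x| ≤ G x := hηG x hx
      have hG0 : 0 ≤ G x := le_trans (abs_nonneg _) hb2
      have hsq : (u' x * η x) ^ 2 ≤ M ^ 2 * G x ^ 2 := by
        have habs : |u' x * η x| ≤ M * G x := by
          rw [abs_mul]
          exact mul_le_mul hb1 hb2 (abs_nonneg _) (le_trans (abs_nonneg _) hb1)
        nlinarith [abs_nonneg (u' x * η x), sq_abs (u' x * η x)]
      rw [hid2]
      nlinarith [sq_nonneg (u' x * η x - u x * w x), hsq]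
    have iiM2G2 : IntervalIntegrable (fun x => 2 * (M ^ 2 * G x ^ 2) + 2 * (u x * w x) ^ 2)
        volume a 1 :=
      contOn_ii ha1 ((continuousOn_const.mul (continuousOn_const.mul (hGc.pow 2))).add
        (continuousOn_const.mul (((hucont.mono hIa).mul hwc).pow 2)))
    have iih'2a1 : IntervalIntegrable (fun x => h' x ^ 2) volume a 1 :=
      contOn_ii ha1 ((hh'c.mono hIa).pow 2)
    have iiuw2 : IntervalIntegrable (fun x => (u x * w x) ^ 2) volume a 1 :=
      contOn_ii ha1 (((hucont.mono hIa).mul hwc).pow 2)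
    have hchain : ∫ x in a..1, h' x ^ 2 ≤ K * Z := by
      have h1' : ∫ x in a..1, h' x ^ 2
          ≤ ∫ x in a..1, (2 * (M ^ 2 * G x ^ 2) + 2 * (u x * w x) ^ 2) :=
        integral_mono_on ha1 iih'2a1 iiM2G2 hpt
      have h2' : ∫ x in a..1, (2 * (M ^ 2 * G x ^ 2) + 2 * (u x * w x) ^ 2)
          = 2 * M ^ 2 * X + 2 * Z := by
        rw [integral_add (((iiG2.const_mul _).const_mul 2)) (iiuw2.const_mul 2),
          intervalIntegral.integral_const_mul, intervalIntegral.integral_const_mul, intervalIntegral.integral_const_mul]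
        ring
      have hYZ : Y ≤ 1 / c ^ 2 * Z := by
        have hptYZ : ∀ x ∈ Icc a 1, x ^ 2 * w x ^ 2 ≤ 1 / c ^ 2 * (u x * w x) ^ 2 := by
          intro x hx
          have hcx : 0 ≤ c * x := mul_nonneg hc0.le (le_trans ha0.le hx.1)
          have hcu' : c * x ≤ u x := hcu x (hIa hx)
          have hsq2 : (c * x) ^ 2 ≤ u x ^ 2 := by nlinarith
          have : c ^ 2 * (x ^ 2 * w x ^ 2) ≤ (u x * w x) ^ 2 := by
            nlinarith [sq_nonneg (w x)]
          calc x ^ 2 * w x ^ 2 = 1 / c ^ 2 * (c ^ 2 * (x ^ 2 * w x ^ 2)) := by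
                field_simp
            _ ≤ 1 / c ^ 2 * (u x * w x) ^ 2 := by
                apply mul_le_mul_of_nonneg_left this (by positivity)
        calc Y ≤ ∫ x in a..1, 1 / c ^ 2 * (u x * w x) ^ 2 :=
              integral_mono_on ha1 (contOn_ii ha1 ((hidc.pow 2).mul (hwc.pow 2))) (iiuw2.const_mul _) hptYZ
          _ = 1 / c ^ 2 * Z := intervalIntegral.integral_const_mul _ _
      calc ∫ x in a..1, h' x ^ 2 ≤ 2 * M ^ 2 * X + 2 * Z := by rw [← h2']; exact h1'
        _ ≤ 2 * M ^ 2 * (4 * Y) + 2 * Z := by nlinarith [hX4Y, hM1]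
        _ ≤ 2 * M ^ 2 * (4 * (1 / c ^ 2 * Z)) + 2 * Z := by nlinarith [hYZ, hM1]
        _ = K * Z := by rw [hKdef]; field_simp; ring
    -- ODE / Riccati part
    set R : ℝ → ℝ := fun x => P x * u' x * (h x ^ 2 / u x) with hRdef
    have hRc : ContinuousOn R (Icc a 1) :=
      ((hPc.mono hIa).mul (hu'c.mono hIa)).mul
        (((hhcont.mono hIa).pow 2).div (hucont.mono hIa) hune)
    have hRd : ∀ x ∈ Ioo a 1,
        HasDerivAt R (P x * h' x ^ 2 + Q x * h x ^ 2 - P x * (u x * w x) ^ 2) x := by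
      intro x hx
      have hxI : x ∈ Icc (0:ℝ) 1 := hIa (Ioo_subset_Icc_self hx)
      have hux : u x ≠ 0 := hune x (Ioo_subset_Icc_self hx)
      have h2 : HasDerivAt (fun s => h s ^ 2 / u s)
          ((2 * h x * h' x * u x - h x ^ 2 * u' x) / (u x) ^ 2) x := by
        have := ((hh x hxI).pow 2).div (hu x hxI) hux
        refine this.congr_deriv ?_
        simp only [Pi.pow_apply]
        ring
      have := (hode x hxI).mul h2
      refine this.congr_deriv ?_
      rw [hwx]
      field_simp
      ring
    have iiPQ : IntervalIntegrable (fun x => P x * h' x ^ 2 + Q x * h x ^ 2) volume a 1 :=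
      contOn_ii ha1 (((hPc.mono hIa).mul ((hh'c.mono hIa).pow 2)).add
        ((hQc.mono hIa).mul ((hhcont.mono hIa).pow 2)))
    have iiPuw : IntervalIntegrable (fun x => P x * (u x * w x) ^ 2) volume a 1 :=
      contOn_ii ha1 ((hPc.mono hIa).mul (((hucont.mono hIa).mul hwc).pow 2))
    have hftcR : (∫ x in a..1, (P x * h' x ^ 2 + Q x * h x ^ 2))
        - (∫ x in a..1, P x * (u x * w x) ^ 2) = - R a := by
      have := ftc' ha1 hRc hRd (iiPQ.sub iiPuw)
      rw [integral_sub iiPQ iiPuw] at this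
      rw [this, hRdef]
      simp [h1]
    have hZV : p₀ * Z ≤ ∫ x in a..1, P x * (u x * w x) ^ 2 := by
      have hwp : ∀ x ∈ Icc a 1, p₀ * (u x * w x) ^ 2 ≤ P x * (u x * w x) ^ 2 :=
        fun x hx => mul_le_mul_of_nonneg_right (hp₀le x (hIa hx)) (sq_nonneg _)
      calc p₀ * Z = ∫ x in a..1, p₀ * (u x * w x) ^ 2 := (intervalIntegral.integral_const_mul _ _).symm
        _ ≤ ∫ x in a..1, P x * (u x * w x) ^ 2 :=
          integral_mono_on ha1 (iiuw2.const_mul _) iiPuw hwp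
    have hRa : R a ≤ p₁ * M / c * N ^ 2 * a := by
      have haI : a ∈ Icc (0:ℝ) 1 := ⟨ha0.le, ha1⟩
      have hua : 0 < u a := hupos' a ⟨le_rfl, ha1⟩
      have hca : (0:ℝ) < c * a := by positivity
      have h6 : h a ^ 2 / u a ≤ N ^ 2 * a ^ 2 / (c * a) := by
        apply div_le_div₀ (by positivity) ?_ hca (hcu a haI)
        have hb := hhb a haI
        have h8 : |h a| * |h a| ≤ (N * a) * (N * a) :=
          mul_self_le_mul_self (abs_nonneg _) hb
        calc h a ^ 2 = |h a| * |h a| := by rw [abs_mul_abs_self]; ring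
          _ ≤ (N * a) * (N * a) := h8
          _ = N ^ 2 * a ^ 2 := by ring
      have h7 : P a * u' a ≤ p₁ * M := by
        calc P a * u' a ≤ |P a * u' a| := le_abs_self _
          _ = |P a| * |u' a| := abs_mul _ _
          _ ≤ p₁ * M := by
            have hPa := hp₁ a haI
            rw [Real.norm_eq_abs] at hPa
            exact mul_le_mul hPa (hMu'b a haI) (abs_nonneg _) hp₁0
      calc R a ≤ p₁ * M * (h a ^ 2 / u a) :=
            mul_le_mul_of_nonneg_right h7 (div_nonneg (sq_nonneg _) hua.le)
        _ ≤ p₁ * M * (N ^ 2 * a ^ 2 / (c * a)) := by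
            apply mul_le_mul_of_nonneg_left h6 (by positivity)
        _ = p₁ * M / c * N ^ 2 * a := by field_simp
    -- pieces on [0, a]
    have hIa0 : Icc (0:ℝ) a ⊆ Icc (0:ℝ) 1 := Icc_subset_Icc le_rfl ha1
    have iiPQ0 : IntervalIntegrable (fun x => P x * h' x ^ 2 + Q x * h x ^ 2) volume 0 a :=
      contOn_ii ha0.le (((hPc.mono hIa0).mul ((hh'c.mono hIa0).pow 2)).add
        ((hQc.mono hIa0).mul ((hhcont.mono hIa0).pow 2)))
    have iih'20 : IntervalIntegrable (fun x => h' x ^ 2) volume 0 a :=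
      contOn_ii ha0.le ((hh'c.mono hIa0).pow 2)
    have hsqN : ∀ t ∈ Icc (0:ℝ) 1, h' t ^ 2 ≤ N ^ 2 := by
      intro t htI
      have hb3 := hN t htI
      calc h' t ^ 2 = |h' t| * |h' t| := by rw [abs_mul_abs_self]; ring
        _ ≤ N * N := mul_self_le_mul_self (abs_nonneg _) hb3
        _ = N ^ 2 := by ring
    have hsqN' : ∀ t ∈ Icc (0:ℝ) 1, h t ^ 2 ≤ N ^ 2 := by
      intro t htI
      have hb4 := hhb1 t htI
      calc h t ^ 2 = |h t| * |h t| := by rw [abs_mul_abs_self]; ring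
        _ ≤ N * N := mul_self_le_mul_self (abs_nonneg _) hb4
        _ = N ^ 2 := by ring
    have hptb : ∀ t ∈ Set.uIoc (0:ℝ) a, ‖P t * h' t ^ 2 + Q t * h t ^ 2‖ ≤ (p₁ + q₁) * N ^ 2 := by
      intro t ht
      rw [uIoc_of_le ha0.le] at ht
      have htI : t ∈ Icc (0:ℝ) 1 := ⟨ht.1.le, le_trans ht.2 ha1⟩
      have hb1 := hp₁ t htI
      have hb2 := hq₁ t htI
      rw [Real.norm_eq_abs] at hb1 hb2 ⊢
      have e1 : |P t| * h' t ^ 2 ≤ p₁ * N ^ 2 :=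
        mul_le_mul hb1 (hsqN t htI) (sq_nonneg _) hp₁0
      have e2 : |Q t| * h t ^ 2 ≤ q₁ * N ^ 2 :=
        mul_le_mul hb2 (hsqN' t htI) (sq_nonneg _) hq₁0
      calc |P t * h' t ^ 2 + Q t * h t ^ 2| ≤ |P t| * h' t ^ 2 + |Q t| * h t ^ 2 := by
            refine le_trans (abs_add_le _ _) ?_
            rw [abs_mul, abs_mul, abs_of_nonneg (sq_nonneg (h' t)),
              abs_of_nonneg (sq_nonneg (h t))]
        _ ≤ (p₁ + q₁) * N ^ 2 := by linarith
    have hsmall : |∫ x in (0:ℝ)..a, (P x * h' x ^ 2 + Q x * h x ^ 2)| ≤ a * ((p₁ + q₁) * N ^ 2) := by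
      have hb := norm_integral_le_of_norm_le_const hptb
      rw [Real.norm_eq_abs] at hb
      calc |∫ x in (0:ℝ)..a, (P x * h' x ^ 2 + Q x * h x ^ 2)|
          ≤ (p₁ + q₁) * N ^ 2 * |a - 0| := hb
        _ = a * ((p₁ + q₁) * N ^ 2) := by
          rw [sub_zero, abs_of_nonneg ha0.le]; ring
    have hsmall2 : ∫ x in (0:ℝ)..a, h' x ^ 2 ≤ a * N ^ 2 := by
      calc ∫ x in (0:ℝ)..a, h' x ^ 2 ≤ ∫ _x in (0:ℝ)..a, N ^ 2 := by
            apply integral_mono_on ha0.le iih'20 intervalIntegrable_const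
            intro x hx
            exact hsqN x ⟨hx.1, le_trans hx.2 ha1⟩
        _ = a * N ^ 2 := by simp
    have hsplitA : (∫ x in (0:ℝ)..a, (P x * h' x ^ 2 + Q x * h x ^ 2))
        + (∫ x in a..1, (P x * h' x ^ 2 + Q x * h x ^ 2)) = A :=
      integral_add_adjacent_intervals iiPQ0 iiPQ
    have hsplitI : (∫ x in (0:ℝ)..a, h' x ^ 2) + (∫ x in a..1, h' x ^ 2) = I1 :=
      integral_add_adjacent_intervals iih'20 iih'2a1
    -- final assembly
    have hT : p₀ / K * (∫ x in a..1, h' x ^ 2) ≤ p₀ * Z := by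
      have := mul_le_mul_of_nonneg_left hchain (by positivity : (0:ℝ) ≤ p₀ / K)
      calc p₀ / K * (∫ x in a..1, h' x ^ 2) ≤ p₀ / K * (K * Z) := this
        _ = p₀ * Z := by field_simp
    have hW : (∫ x in a..1, (P x * h' x ^ 2 + Q x * h x ^ 2))
        ≤ A + a * ((p₁ + q₁) * N ^ 2) := by
      have := abs_le.mp hsmall
      linarith [hsplitA, this.1]
    have hpK : (0:ℝ) ≤ p₀ / K := by positivity
    have hfin1 : p₀ / K * I1 ≤ p₀ / K * (∫ x in a..1, h' x ^ 2) + p₀ / K * (a * N ^ 2) := by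
      have h9 : I1 ≤ (∫ x in a..1, h' x ^ 2) + a * N ^ 2 := by linarith [hsplitI, hsmall2]
      have h10 := mul_le_mul_of_nonneg_left h9 hpK
      rw [mul_add] at h10
      exact h10
    have hVW := hftcR
    rw [hCC]
    linarith [hfin1, hT, hZV, hVW, hRa, hW]

  -- conclude from main
  have key : ∀ ε > (0:ℝ), p₀ / K * I1 ≤ A + ε := by
    intro ε hε
    have ha : min (ε / (CC + 1)) (1/2) ∈ Ioo (0:ℝ) 1 :=
      ⟨lt_min (by positivity) (by norm_num),
        lt_of_le_of_lt (min_le_right _ _) (by norm_num)⟩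
    refine le_trans (main _ ha) ?_
    have h1' : min (ε / (CC + 1)) (1/2) * CC ≤ ε / (CC + 1) * CC :=
      mul_le_mul_of_nonneg_right (min_le_left _ _) hCC0
    have h2' : ε / (CC + 1) * CC ≤ ε := by
      rw [div_mul_eq_mul_div, div_le_iff₀ (by positivity)]
      nlinarith [hε.le, hCC0]
    linarith
  linarith [le_of_forall_pos_le_add key]


section FD
variable {F : ℝ × ℝ × ℝ → ℝ}

private lemma curve1 (hf : ContDiff ℝ 2 F) {γ : ℝ → ℝ × ℝ × ℝ} {v : ℝ × ℝ × ℝ} {t : ℝ}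
    (hγ : HasDerivAt γ v t) :
    HasDerivAt (fun s => F (γ s)) (fderiv ℝ F (γ t) v) t :=
  ((hf.differentiable (by norm_num) (γ t)).hasFDerivAt).comp_hasDerivAt t hγ

private lemma curve2 (hf : ContDiff ℝ 2 F) {γ : ℝ → ℝ × ℝ × ℝ} {v z : ℝ × ℝ × ℝ} {t : ℝ}
    (hγ : HasDerivAt γ v t) :
    HasDerivAt (fun s => fderiv ℝ F (γ s) z)
      ((fderiv ℝ (fderiv ℝ F) (γ t) v) z) t := by
  have h1 : ContDiff ℝ 1 (fderiv ℝ F) := hf.fderiv_right (le_refl _)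
  have h2 : HasFDerivAt (fderiv ℝ F) (fderiv ℝ (fderiv ℝ F) (γ t)) (γ t) :=
    (h1.differentiable one_ne_zero (γ t)).hasFDerivAt
  have h3 : HasDerivAt (fun s => fderiv ℝ F (γ s)) (fderiv ℝ (fderiv ℝ F) (γ t) v) t :=
    h2.comp_hasDerivAt t hγ
  exact ((ContinuousLinearMap.apply ℝ ℝ z).hasFDerivAt).comp_hasDerivAt t h3

private lemma taylor2 (hf : ContDiff ℝ 2 F) (q v : ℝ × ℝ × ℝ) :
    ∃ ξ ∈ Ioo (0:ℝ) 1, F (q + v) - F q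
      = fderiv ℝ F q v + (1/2) * ((fderiv ℝ (fderiv ℝ F) (q + ξ • v) v) v) := by
  have hγ : ∀ t : ℝ, HasDerivAt (fun s : ℝ => q + s • v) v t := by
    intro t
    simpa using ((hasDerivAt_id t).smul_const v).const_add q
  set A := F (q + v) - F q - fderiv ℝ F q v with hA
  set g : ℝ → ℝ := fun t =>
    F (q + v) - F (q + t • v) - (1 - t) * fderiv ℝ F (q + t • v) v - A * (1 - t) ^ 2 with hg
  have hgd : ∀ t : ℝ, HasDerivAt g
      (-((1 - t) * ((fderiv ℝ (fderiv ℝ F) (q + t • v) v) v)) + A * (2 * (1 - t))) t := by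
    intro t
    have d1 : HasDerivAt (fun s : ℝ => F (q + s • v)) (fderiv ℝ F (q + t • v) v) t :=
      curve1 hf (hγ t)
    have d2 : HasDerivAt (fun s : ℝ => fderiv ℝ F (q + s • v) v)
        ((fderiv ℝ (fderiv ℝ F) (q + t • v) v) v) t := curve2 hf (hγ t)
    have d3 : HasDerivAt (fun s : ℝ => (1 - s)) (-1 : ℝ) t := by
      simpa using ((hasDerivAt_id t).const_sub 1)
    have d4 : HasDerivAt (fun s : ℝ => (1 - s) * fderiv ℝ F (q + s • v) v)
        ((-1) * fderiv ℝ F (q + t • v) v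
          + (1 - t) * ((fderiv ℝ (fderiv ℝ F) (q + t • v) v) v)) t := d3.mul d2
    have d5 : HasDerivAt (fun s : ℝ => A * (1 - s) ^ 2) (A * (2 * (1 - t) * (-1))) t := by
      exact ((d3.pow 2).const_mul A).congr_deriv (by ring)
    have := (((d1.const_sub (F (q + v))).sub d4).sub d5)
    refine this.congr_deriv ?_
    ring
  have hg0 : g 0 = 0 := by
    rw [hg, hA]; simp
  have hg1 : g 1 = 0 := by
    rw [hg]; simp
  obtain ⟨ξ, hξ, hξ0⟩ := exists_hasDerivAt_eq_zero one_pos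
    (fun t _ => (hgd t).continuousAt.continuousWithinAt) (hg0.trans hg1.symm)
    (fun t _ => hgd t)
  refine ⟨ξ, hξ, ?_⟩
  have hne : (1 : ℝ) - ξ ≠ 0 := by
    have := hξ.2; intro hcon; linarith [sub_eq_zero.mp hcon]
  have hkey : (fderiv ℝ (fderiv ℝ F) (q + ξ • v) v) v = 2 * A := by
    have : (1 - ξ) * (2 * A - (fderiv ℝ (fderiv ℝ F) (q + ξ • v) v) v) = 0 := by
      rw [← hξ0]; ring
    rcases mul_eq_zero.mp this with h | h
    · exact absurd h hne
    · linarith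
  rw [hkey, hA]
  ring
end FD

section ID
variable {f : ℝ → ℝ → ℝ → ℝ}

private lemma gam1 (a b c : ℝ) :
    HasDerivAt (fun t : ℝ => ((t, b, c) : ℝ × ℝ × ℝ)) ((1, 0, 0) : ℝ × ℝ × ℝ) a :=
  (hasDerivAt_id a).prodMk ((hasDerivAt_const a b).prodMk (hasDerivAt_const a c))

private lemma gam2 (a b c : ℝ) :
    HasDerivAt (fun t : ℝ => ((a, t, c) : ℝ × ℝ × ℝ)) ((0, 1, 0) : ℝ × ℝ × ℝ) b :=
  (hasDerivAt_const b a).prodMk ((hasDerivAt_id b).prodMk (hasDerivAt_const b c))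

private lemma d1a (hf : ContDiff ℝ 2 (fun p : ℝ × ℝ × ℝ => f p.1 p.2.1 p.2.2)) (a b c : ℝ) :
    deriv (fun t => f t b c) a
      = fderiv ℝ (fun p : ℝ × ℝ × ℝ => f p.1 p.2.1 p.2.2) (a, b, c) (1, 0, 0) :=
  (curve1 hf (gam1 a b c)).deriv

private lemma d1b (hf : ContDiff ℝ 2 (fun p : ℝ × ℝ × ℝ => f p.1 p.2.1 p.2.2)) (a b c : ℝ) :
    deriv (fun t => f a t c) b
      = fderiv ℝ (fun p : ℝ × ℝ × ℝ => f p.1 p.2.1 p.2.2) (a, b, c) (0, 1, 0) :=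
  (curve1 hf (gam2 a b c)).deriv

private lemma d2aa (hf : ContDiff ℝ 2 (fun p : ℝ × ℝ × ℝ => f p.1 p.2.1 p.2.2)) (a b c : ℝ) :
    deriv (fun s => deriv (fun t => f t b c) s) a
      = fderiv ℝ (fderiv ℝ (fun p : ℝ × ℝ × ℝ => f p.1 p.2.1 p.2.2)) (a, b, c)
          (1, 0, 0) (1, 0, 0) := by
  have hfun : (fun s => deriv (fun t => f t b c) s)
      = fun s => fderiv ℝ (fun p : ℝ × ℝ × ℝ => f p.1 p.2.1 p.2.2) (s, b, c) (1, 0, 0) :=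
    funext fun s => d1a hf s b c
  rw [hfun]
  exact (curve2 hf (gam1 a b c)).deriv

private lemma d2ba (hf : ContDiff ℝ 2 (fun p : ℝ × ℝ × ℝ => f p.1 p.2.1 p.2.2)) (a b c : ℝ) :
    deriv (fun s => deriv (fun t => f t s c) a) b
      = fderiv ℝ (fderiv ℝ (fun p : ℝ × ℝ × ℝ => f p.1 p.2.1 p.2.2)) (a, b, c)
          (0, 1, 0) (1, 0, 0) := by
  have hfun : (fun s => deriv (fun t => f t s c) a)
      = fun s => fderiv ℝ (fun p : ℝ × ℝ × ℝ => f p.1 p.2.1 p.2.2) (a, s, c) (1, 0, 0) :=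
    funext fun s => d1a hf a s c
  rw [hfun]
  exact (curve2 hf (gam2 a b c)).deriv

private lemma d2bb (hf : ContDiff ℝ 2 (fun p : ℝ × ℝ × ℝ => f p.1 p.2.1 p.2.2)) (a b c : ℝ) :
    deriv (fun s => deriv (fun t => f a t c) s) b
      = fderiv ℝ (fderiv ℝ (fun p : ℝ × ℝ × ℝ => f p.1 p.2.1 p.2.2)) (a, b, c)
          (0, 1, 0) (0, 1, 0) := by
  have hfun : (fun s => deriv (fun t => f a t c) s)
      = fun s => fderiv ℝ (fun p : ℝ × ℝ × ℝ => f p.1 p.2.1 p.2.2) (a, s, c) (0, 1, 0) :=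
    funext fun s => d1b hf a s c
  rw [hfun]
  exact (curve2 hf (gam2 a b c)).deriv

private lemma dsymm (hf : ContDiff ℝ 2 (fun p : ℝ × ℝ × ℝ => f p.1 p.2.1 p.2.2)) (p v z : ℝ × ℝ × ℝ) :
    fderiv ℝ (fderiv ℝ (fun p : ℝ × ℝ × ℝ => f p.1 p.2.1 p.2.2)) p v z
      = fderiv ℝ (fderiv ℝ (fun p : ℝ × ℝ × ℝ => f p.1 p.2.1 p.2.2)) p z v := by
  have h1 : ContDiff ℝ 1 (fderiv ℝ (fun p : ℝ × ℝ × ℝ => f p.1 p.2.1 p.2.2)) :=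
    hf.fderiv_right (le_refl _)
  exact second_derivative_symmetric
    (fun q => ((hf.differentiable (by norm_num) q).hasFDerivAt))
    ((h1.differentiable one_ne_zero p).hasFDerivAt) v z
end ID

/-- Second-order sufficient optimality condition (Corollary 2): if `y*` satisfies the
Euler equation, `P(x) = f_{y'y'}` is C¹ and positive, the mixed partial
`m(x) = f_{y'y}` is C¹ (with derivative `m'`), `Q = f_{yy} - m'`, and the solution of the
Jacobi equation `(P u')' = Q u` with `u(0) = 0`, `u'(0) = 1` is positive on `(0,1]`, then
`y*` is a strict local minimizer of `F` over `C¹₀` in the C¹ max-norm. -/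
theorem strict_local_min_of_jacobi_positive
    (f : ℝ → ℝ → ℝ → ℝ)
    (hf : ContDiff ℝ 2 (fun p : ℝ × ℝ × ℝ => f p.1 p.2.1 p.2.2))
    (y yd : ℝ → ℝ)
    (hy : ∀ x ∈ Icc (0:ℝ) 1, HasDerivAt y (yd x) x)
    (hydc : ContinuousOn yd (Icc 0 1))
    (hy0 : y 0 = 0) (hy1 : y 1 = 0)
    (euler : ∀ x ∈ Icc (0:ℝ) 1,
      HasDerivAt (fun s => deriv (fun t => f t (y s) s) (yd s))
        (deriv (fun t => f (yd x) t x) (y x)) x)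
    (P Q m m' : ℝ → ℝ)
    (hPdef : ∀ x ∈ Icc (0:ℝ) 1,
      P x = deriv (fun a => deriv (fun t => f t (y x) x) a) (yd x))
    (hmdef : ∀ x ∈ Icc (0:ℝ) 1,
      m x = deriv (fun b => deriv (fun t => f t b x) (yd x)) (y x))
    (hm : ∀ x ∈ Icc (0:ℝ) 1, HasDerivAt m (m' x) x)
    (hm'c : ContinuousOn m' (Icc 0 1))
    (hQdef : ∀ x ∈ Icc (0:ℝ) 1,
      Q x = deriv (fun b => deriv (fun t => f (yd x) t x) b) (y x) - m' x)
    (hPC1 : ContDiffOn ℝ 1 P (Icc 0 1))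
    (hPpos : ∀ x ∈ Icc (0:ℝ) 1, 0 < P x)
    (u u' : ℝ → ℝ)
    (hu : ∀ x ∈ Icc (0:ℝ) 1, HasDerivAt u (u' x) x)
    (hode : ∀ x ∈ Icc (0:ℝ) 1, HasDerivAt (fun s => P s * u' s) (Q x * u x) x)
    (hu0 : u 0 = 0) (hu1 : u' 0 = 1)
    (hupos : ∀ x ∈ Ioc (0:ℝ) 1, 0 < u x) :
    ∃ ε > (0:ℝ), ∀ z zd : ℝ → ℝ,
      (∀ x ∈ Icc (0:ℝ) 1, HasDerivAt z (zd x) x) →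
      ContinuousOn zd (Icc 0 1) →
      z 0 = 0 → z 1 = 0 →
      (∀ x ∈ Icc (0:ℝ) 1, |z x - y x| ≤ ε ∧ |zd x - yd x| ≤ ε) →
      (∃ x ∈ Icc (0:ℝ) 1, z x ≠ y x) →
      (∫ x in (0:ℝ)..1, f (yd x) (y x) x) < ∫ x in (0:ℝ)..1, f (zd x) (z x) x := by
  have hI01 : (0:ℝ) ≤ 1 := zero_le_one
  have hcF : Continuous (fun p : ℝ × ℝ × ℝ => f p.1 p.2.1 p.2.2) := hf.continuous
  have hC1d : ContDiff ℝ 1 (fderiv ℝ (fun p : ℝ × ℝ × ℝ => f p.1 p.2.1 p.2.2)) :=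
    hf.fderiv_right (le_refl _)
  have hD1ct : Continuous (fderiv ℝ (fun p : ℝ × ℝ × ℝ => f p.1 p.2.1 p.2.2)) :=
    hC1d.continuous
  have hD2ct : Continuous
      (fderiv ℝ (fderiv ℝ (fun p : ℝ × ℝ × ℝ => f p.1 p.2.1 p.2.2))) :=
    hC1d.continuous_fderiv one_ne_zero
  set F1 := fderiv ℝ (fun p : ℝ × ℝ × ℝ => f p.1 p.2.1 p.2.2) with hF1def
  set F2 := fderiv ℝ F1 with hF2def
  have hyc : ContinuousOn y (Icc 0 1) :=
    fun x hx => (hy x hx).continuousAt.continuousWithinAt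
  have hγc : ContinuousOn (fun x => ((yd x, y x, x) : ℝ × ℝ × ℝ)) (Icc 0 1) :=
    hydc.prodMk (hyc.prodMk continuousOn_id)
  have hmc : ContinuousOn m (Icc 0 1) :=
    fun x hx => (hm x hx).continuousAt.continuousWithinAt
  have hPuc : ContinuousOn (fun s => P s * u' s) (Icc 0 1) :=
    fun x hx => (hode x hx).continuousAt.continuousWithinAt
  have hPc : ContinuousOn P (Icc 0 1) := hPC1.continuousOn
  have hu'c : ContinuousOn u' (Icc 0 1) := by
    apply ContinuousOn.congr (hPuc.div hPc (fun x hx => (hPpos x hx).ne'))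
    intro x hx
    exact (mul_div_cancel_left₀ (u' x) (hPpos x hx).ne').symm
  have hD2γc : ContinuousOn (fun x => F2 (yd x, y x, x)) (Icc 0 1) :=
    hD2ct.comp_continuousOn hγc
  have hD1γc : ContinuousOn (fun x => F1 (yd x, y x, x)) (Icc 0 1) :=
    hD1ct.comp_continuousOn hγc
  have hQc : ContinuousOn Q (Icc 0 1) := by
    apply ContinuousOn.congr
      (f := fun x => F2 (yd x, y x, x) (0, 1, 0) (0, 1, 0) - m' x)
      (((hD2γc.clm_apply continuousOn_const).clm_apply continuousOn_const).sub hm'c)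
    intro x hx
    rw [hQdef x hx, d2bb hf]
  obtain ⟨C₀, hC₀⟩ := isCompact_Icc.exists_bound_of_continuousOn hγc
  obtain ⟨δ, hδ0, hjac⟩ := jacobi_bound hPc hQc hPpos hu hu'c hode hu0 hu1 hupos
  have hucD2 := (isCompact_closedBall (0 : ℝ × ℝ × ℝ)
    (C₀ + 1)).uniformContinuousOn_of_continuous (f := F2) hD2ct.continuousOn
  obtain ⟨ε₁, hε₁0, hucd⟩ := (Metric.uniformContinuousOn_iff (f := F2)).mp hucD2 (δ/4) (by positivity)
  refine ⟨min (ε₁/2) 1, by positivity, ?_⟩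
  set ε := min (ε₁/2) 1 with hεdef
  have hε0 : 0 < ε := by positivity
  have hεle1 : ε ≤ 1 := min_le_right _ _
  have hεlt : ε < ε₁ := lt_of_le_of_lt (min_le_left _ _) (by linarith)
  intro z zd hz hzdc hz0 hz1 hclose hne
  set dh : ℝ → ℝ := fun x => z x - y x with hdhdef
  set dh' : ℝ → ℝ := fun x => zd x - yd x with hdh'def
  have hdh : ∀ x ∈ Icc (0:ℝ) 1, HasDerivAt dh (dh' x) x :=
    fun x hx => (hz x hx).sub (hy x hx)
  have hzc : ContinuousOn z (Icc 0 1) :=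
    fun x hx => (hz x hx).continuousAt.continuousWithinAt
  have hdhc : ContinuousOn dh (Icc 0 1) := hzc.sub hyc
  have hdh'c : ContinuousOn dh' (Icc 0 1) := hzdc.sub hydc
  have hdh0 : dh 0 = 0 := by rw [hdhdef]; simp [hz0, hy0]
  have hdh1 : dh 1 = 0 := by rw [hdhdef]; simp [hz1, hy1]
  have hcl1 : ∀ x ∈ Icc (0:ℝ) 1, |dh x| ≤ ε := fun x hx => (hclose x hx).1
  have hcl2 : ∀ x ∈ Icc (0:ℝ) 1, |dh' x| ≤ ε := fun x hx => (hclose x hx).2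
  -- pointwise Taylor inequality
  have hTay : ∀ x ∈ Icc (0:ℝ) 1,
      (dh' x * F1 (yd x, y x, x) (1, 0, 0) + dh x * F1 (yd x, y x, x) (0, 1, 0))
        + (1/2) * (P x * dh' x ^ 2 + Q x * dh x ^ 2)
        + (1/2) * (2 * m x * dh x * dh' x + m' x * dh x ^ 2)
        - δ/8 * dh x ^ 2 - δ/8 * dh' x ^ 2
      ≤ f (zd x) (z x) x - f (yd x) (y x) x := by
    intro x hx
    obtain ⟨ξ, hξ, htay0⟩ := taylor2 hf (yd x, y x, x) (dh' x, dh x, 0)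
    have hq1 : ((yd x, y x, x) : ℝ × ℝ × ℝ) + (dh' x, dh x, 0) = (zd x, z x, x) := by
      rw [hdhdef, hdh'def, Prod.mk_add_mk, Prod.mk_add_mk]
      norm_num
    rw [hq1] at htay0
    have htay : f (zd x) (z x) x - f (yd x) (y x) x
        = F1 (yd x, y x, x) (dh' x, dh x, 0)
          + (1/2) * (F2 ((yd x, y x, x) + ξ • (dh' x, dh x, 0)) (dh' x, dh x, 0)
              (dh' x, dh x, 0)) := htay0
    have hvnorm : ‖((dh' x, dh x, 0) : ℝ × ℝ × ℝ)‖ ≤ ε := by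
      rw [Prod.norm_def, Prod.norm_def]
      simp only [Real.norm_eq_abs, abs_zero]
      exact max_le (hcl2 x hx) (max_le (hcl1 x hx) hε0.le)
    have hξv : ‖ξ • ((dh' x, dh x, 0) : ℝ × ℝ × ℝ)‖ ≤ ε := by
      rw [norm_smul, Real.norm_eq_abs, abs_of_nonneg hξ.1.le]
      calc ξ * ‖((dh' x, dh x, 0) : ℝ × ℝ × ℝ)‖ ≤ 1 * ε :=
            mul_le_mul hξ.2.le hvnorm (norm_nonneg _) one_pos.le
        _ = ε := one_mul _
    have hγin : ((yd x, y x, x) : ℝ × ℝ × ℝ) ∈ Metric.closedBall (0 : ℝ × ℝ × ℝ) (C₀ + 1) := by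
      rw [Metric.mem_closedBall, dist_zero_right]
      linarith [hC₀ x hx]
    have hγξin : ((yd x, y x, x) : ℝ × ℝ × ℝ) + ξ • (dh' x, dh x, 0)
        ∈ Metric.closedBall (0 : ℝ × ℝ × ℝ) (C₀ + 1) := by
      rw [Metric.mem_closedBall, dist_zero_right]
      calc ‖((yd x, y x, x) : ℝ × ℝ × ℝ) + ξ • (dh' x, dh x, 0)‖
          ≤ ‖((yd x, y x, x) : ℝ × ℝ × ℝ)‖ + ‖ξ • ((dh' x, dh x, 0) : ℝ × ℝ × ℝ)‖ :=
            norm_add_le _ _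
        _ ≤ C₀ + 1 := add_le_add (hC₀ x hx) (le_trans hξv hεle1)
    have hdist : dist (((yd x, y x, x) : ℝ × ℝ × ℝ) + ξ • (dh' x, dh x, 0))
        ((yd x, y x, x) : ℝ × ℝ × ℝ) < ε₁ := by
      rw [dist_eq_norm, add_sub_cancel_left]
      exact lt_of_le_of_lt hξv hεlt
    have hdd := hucd _ hγξin _ hγin hdist
    have hdd : ‖F2 ((yd x, y x, x) + ξ • (dh' x, dh x, 0)) - F2 (yd x, y x, x)‖ < δ/4 := by
      convert hdd using 1
      exact (dist_eq_norm (F2 ((yd x, y x, x) + ξ • (dh' x, dh x, 0))) (F2 (yd x, y x, x))).symm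
    have herr : |F2 ((yd x, y x, x) + ξ • (dh' x, dh x, 0)) (dh' x, dh x, 0) (dh' x, dh x, 0)
        - F2 (yd x, y x, x) (dh' x, dh x, 0) (dh' x, dh x, 0)|
        ≤ δ/4 * (dh x ^ 2 + dh' x ^ 2) := by
      set p := ((yd x, y x, x) : ℝ × ℝ × ℝ) + ξ • (dh' x, dh x, 0) with hp
      set q := ((yd x, y x, x) : ℝ × ℝ × ℝ) with hqq
      set v := ((dh' x, dh x, 0) : ℝ × ℝ × ℝ) with hv
      have h3 : F2 p v v - F2 q v v = ((F2 p - F2 q) v) v := by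
        simp [ContinuousLinearMap.sub_apply]
      have hv2 : ‖v‖ ^ 2 ≤ dh x ^ 2 + dh' x ^ 2 := by
        have hvmax : ‖v‖ = max |dh' x| (max |dh x| 0) := by
          rw [hv, Prod.norm_def, Prod.norm_def]
          simp [Real.norm_eq_abs]
        rw [hvmax]
        rcases max_cases |dh' x| (max |dh x| 0) with ⟨he, _⟩ | ⟨he, _⟩
        · rw [he]; nlinarith [sq_abs (dh' x), sq_nonneg (dh x)]
        · rw [he]
          rcases max_cases |dh x| (0:ℝ) with ⟨he2, _⟩ | ⟨he2, _⟩
          · rw [he2]; nlinarith [sq_abs (dh x), sq_nonneg (dh' x)]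
          · rw [he2]
            simpa using add_nonneg (sq_nonneg (dh x)) (sq_nonneg (dh' x))
      rw [h3, ← Real.norm_eq_abs]
      calc ‖((F2 p - F2 q) v) v‖ ≤ ‖(F2 p - F2 q) v‖ * ‖v‖ :=
            ContinuousLinearMap.le_opNorm _ _
        _ ≤ (‖F2 p - F2 q‖ * ‖v‖) * ‖v‖ :=
            mul_le_mul_of_nonneg_right
              (ContinuousLinearMap.le_opNorm _ _) (norm_nonneg _)
        _ = ‖F2 p - F2 q‖ * ‖v‖ ^ 2 := by ring
        _ ≤ δ/4 * (dh x ^ 2 + dh' x ^ 2) := by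
            apply mul_le_mul hdd.le hv2 (by positivity) (by linarith)
    have hvdec : ((dh' x, dh x, 0) : ℝ × ℝ × ℝ)
        = dh' x • ((1, 0, 0) : ℝ × ℝ × ℝ) + dh x • ((0, 1, 0) : ℝ × ℝ × ℝ) := by
      simp [Prod.smul_mk, Prod.mk_add_mk]
    have i1 : F2 (yd x, y x, x) (1, 0, 0) (1, 0, 0) = P x := by
      rw [hPdef x hx, d2aa hf]
    have i2 : F2 (yd x, y x, x) (0, 1, 0) (1, 0, 0) = m x := by
      rw [hmdef x hx, d2ba hf]
    have i3 : F2 (yd x, y x, x) (1, 0, 0) (0, 1, 0) = m x := by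
      rw [← i2]; exact dsymm hf _ _ _
    have i4 : F2 (yd x, y x, x) (0, 1, 0) (0, 1, 0) = Q x + m' x := by
      have := hQdef x hx
      rw [d2bb hf] at this
      linarith
    have hbil : F2 (yd x, y x, x) (dh' x, dh x, 0) (dh' x, dh x, 0)
        = P x * dh' x ^ 2 + 2 * m x * dh x * dh' x + (Q x + m' x) * dh x ^ 2 := by
      rw [hvdec]
      simp only [map_add, _root_.map_smul, ContinuousLinearMap.add_apply,
        ContinuousLinearMap.smul_apply, smul_eq_mul]
      rw [i1, i2, i3, i4]
      ring
    have hlin : F1 (yd x, y x, x) (dh' x, dh x, 0)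
        = dh' x * F1 (yd x, y x, x) (1, 0, 0) + dh x * F1 (yd x, y x, x) (0, 1, 0) := by
      rw [hvdec]
      simp only [map_add, _root_.map_smul, smul_eq_mul]
    rw [htay, hlin]
    rw [hbil] at herr
    have h5 := abs_le.mp herr
    linarith [h5.1]

  -- continuity abbreviations
  have hA1c : ContinuousOn (fun s => F1 (yd s, y s, s) (1, 0, 0)) (Icc 0 1) :=
    hD1γc.clm_apply continuousOn_const
  have hA2c : ContinuousOn (fun s => F1 (yd s, y s, s) (0, 1, 0)) (Icc 0 1) :=
    hD1γc.clm_apply continuousOn_const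
  -- first-order term integrates to zero (Euler equation)
  have hA1d : ∀ x ∈ Icc (0:ℝ) 1, HasDerivAt (fun s => F1 (yd s, y s, s) (1, 0, 0))
      (F1 (yd x, y x, x) (0, 1, 0)) x := by
    have hfun2 : (fun s => deriv (fun t => f t (y s) s) (yd s))
        = fun s => F1 (yd s, y s, s) (1, 0, 0) := funext fun s => d1a hf (yd s) (y s) s
    intro x hx
    have he := euler x hx
    rw [hfun2, d1b hf] at he
    exact he
  have iiL1 : IntervalIntegrable (fun x => dh' x * F1 (yd x, y x, x) (1, 0, 0)
      + dh x * F1 (yd x, y x, x) (0, 1, 0)) volume 0 1 :=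
    contOn_ii hI01 ((hdh'c.mul hA1c).add (hdhc.mul hA2c))
  have hL1int : ∫ x in (0:ℝ)..1, (dh' x * F1 (yd x, y x, x) (1, 0, 0)
      + dh x * F1 (yd x, y x, x) (0, 1, 0)) = 0 := by
    have hprod : ∀ x ∈ Ioo (0:ℝ) 1,
        HasDerivAt (fun s => F1 (yd s, y s, s) (1, 0, 0) * dh s)
          (dh' x * F1 (yd x, y x, x) (1, 0, 0) + dh x * F1 (yd x, y x, x) (0, 1, 0)) x := by
      intro x hx
      have hxI := Ioo_subset_Icc_self hx
      exact ((hA1d x hxI).mul (hdh x hxI)).congr_deriv (by ring)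
    have hftc := ftc' hI01 (hA1c.mul hdhc) hprod iiL1
    simpa [hdh0, hdh1] using hftc
  -- integration by parts for mixed term
  have iiIBP : IntervalIntegrable (fun x => 2 * m x * dh x * dh' x + m' x * dh x ^ 2)
      volume 0 1 :=
    contOn_ii hI01 ((((continuousOn_const.mul hmc).mul hdhc).mul hdh'c).add
      (hm'c.mul (hdhc.pow 2)))
  have hIBP : ∫ x in (0:ℝ)..1, (2 * m x * dh x * dh' x + m' x * dh x ^ 2) = 0 := by
    have hd : ∀ x ∈ Ioo (0:ℝ) 1, HasDerivAt (fun s => m s * dh s ^ 2)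
        (2 * m x * dh x * dh' x + m' x * dh x ^ 2) x := by
      intro x hx
      have hxI := Ioo_subset_Icc_self hx
      exact ((hm x hxI).mul ((hdh x hxI).pow 2)).congr_deriv (by simp only [Pi.pow_apply]; ring)
    have hftc := ftc' hI01 (hmc.mul (hdhc.pow 2)) hd iiIBP
    simpa [hdh0, hdh1] using hftc
  -- Jacobi quadratic-form bound
  have hjb := hjac dh dh' ε hdh hdh'c hdh0 hdh1 hcl2
  set J := ∫ t in (0:ℝ)..1, dh' t ^ 2 with hJdef
  -- Poincaré pointwise and integral
  have hpoin : ∀ x ∈ Icc (0:ℝ) 1, dh x ^ 2 ≤ J := by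
    intro x hx
    have hIs : Icc (0:ℝ) x ⊆ Icc 0 1 := Icc_subset_Icc le_rfl hx.2
    have hfx : ∫ t in (0:ℝ)..x, dh' t = dh x := by
      have hftc := ftc' hx.1 (hdhc.mono hIs)
        (fun s hs => hdh s (hIs (Ioo_subset_Icc_self hs)))
        (contOn_ii hx.1 (hdh'c.mono hIs))
      rw [hdh0, sub_zero] at hftc
      exact hftc
    have hcs := cs_integral hx.1
      (continuousOn_const : ContinuousOn (fun _ => (1:ℝ)) (Icc 0 x)) (hdh'c.mono hIs)
    have e1 : (∫ t in (0:ℝ)..x, (1:ℝ) * dh' t) = dh x := by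
      simp only [one_mul]; exact hfx
    have e2 : (∫ _t in (0:ℝ)..x, (1:ℝ) ^ 2) = x := by simp
    rw [e1, e2] at hcs
    have hnn1 : 0 ≤ ∫ t in (0:ℝ)..x, dh' t ^ 2 :=
      integral_nonneg hx.1 (fun t _ => sq_nonneg _)
    have hmono2 : (∫ t in (0:ℝ)..x, dh' t ^ 2) ≤ J := by
      rw [hJdef]
      have hsplit := integral_add_adjacent_intervals
        (contOn_ii hx.1 ((hdh'c.mono hIs).pow 2))
        (contOn_ii hx.2 ((hdh'c.mono (Icc_subset_Icc hx.1 le_rfl)).pow 2))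
      simp only [Pi.pow_apply] at hsplit
      have hnn : 0 ≤ ∫ t in x..1, dh' t ^ 2 :=
        integral_nonneg hx.2 (fun t _ => sq_nonneg _)
      linarith [hsplit]
    rw [hJdef]
    nlinarith [hcs, hmono2, hx.1, hx.2, hnn1]
  have hPoi : (∫ x in (0:ℝ)..1, dh x ^ 2) ≤ J := by
    calc ∫ x in (0:ℝ)..1, dh x ^ 2
        ≤ ∫ _x in (0:ℝ)..1, J :=
          integral_mono_on hI01 (contOn_ii hI01 (hdhc.pow 2))
            intervalIntegrable_const hpoin
      _ = J := by simp
  -- positivity of the Dirichlet integral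
  obtain ⟨x₀, hx₀, hnex⟩ := hne
  have hdhx₀ : dh x₀ ≠ 0 := sub_ne_zero.mpr hnex
  have hIpos : 0 < J :=
    lt_of_lt_of_le (by positivity : (0:ℝ) < dh x₀ ^ 2) (hpoin x₀ hx₀)
  -- integrate the pointwise inequality
  have hTTc : ContinuousOn (fun x => f (zd x) (z x) x - f (yd x) (y x) x) (Icc 0 1) :=
    (hcF.comp_continuousOn (hzdc.prodMk (hzc.prodMk continuousOn_id))).sub
      (hcF.comp_continuousOn hγc)
  have iiPQ : IntervalIntegrable (fun x => P x * dh' x ^ 2 + Q x * dh x ^ 2) volume 0 1 :=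
    contOn_ii hI01 ((hPc.mul (hdh'c.pow 2)).add (hQc.mul (hdhc.pow 2)))
  have iidh2 : IntervalIntegrable (fun x => dh x ^ 2) volume 0 1 :=
    contOn_ii hI01 (hdhc.pow 2)
  have iidh'2 : IntervalIntegrable (fun x => dh' x ^ 2) volume 0 1 :=
    contOn_ii hI01 (hdh'c.pow 2)
  have hLLc : ContinuousOn (fun x =>
      (dh' x * F1 (yd x, y x, x) (1, 0, 0) + dh x * F1 (yd x, y x, x) (0, 1, 0))
        + (1/2) * (P x * dh' x ^ 2 + Q x * dh x ^ 2)
        + (1/2) * (2 * m x * dh x * dh' x + m' x * dh x ^ 2)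
        - δ/8 * dh x ^ 2 - δ/8 * dh' x ^ 2) (Icc 0 1) := by
    refine ContinuousOn.sub (ContinuousOn.sub (ContinuousOn.add (ContinuousOn.add
      ((hdh'c.mul hA1c).add (hdhc.mul hA2c))
      (continuousOn_const.mul ((hPc.mul (hdh'c.pow 2)).add (hQc.mul (hdhc.pow 2)))))
      (continuousOn_const.mul ((((continuousOn_const.mul hmc).mul hdhc).mul hdh'c).add
        (hm'c.mul (hdhc.pow 2)))))
      (continuousOn_const.mul (hdhc.pow 2))) (continuousOn_const.mul (hdh'c.pow 2))
  have hint := integral_mono_on hI01 (contOn_ii hI01 hLLc) (contOn_ii hI01 hTTc) hTay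
  have hexp : (∫ x in (0:ℝ)..1,
      ((dh' x * F1 (yd x, y x, x) (1, 0, 0) + dh x * F1 (yd x, y x, x) (0, 1, 0))
        + (1/2) * (P x * dh' x ^ 2 + Q x * dh x ^ 2)
        + (1/2) * (2 * m x * dh x * dh' x + m' x * dh x ^ 2)
        - δ/8 * dh x ^ 2 - δ/8 * dh' x ^ 2))
      = (∫ x in (0:ℝ)..1, (dh' x * F1 (yd x, y x, x) (1, 0, 0)
          + dh x * F1 (yd x, y x, x) (0, 1, 0)))
        + (1/2) * (∫ x in (0:ℝ)..1, (P x * dh' x ^ 2 + Q x * dh x ^ 2))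
        + (1/2) * (∫ x in (0:ℝ)..1, (2 * m x * dh x * dh' x + m' x * dh x ^ 2))
        - δ/8 * (∫ x in (0:ℝ)..1, dh x ^ 2) - δ/8 * (∫ x in (0:ℝ)..1, dh' x ^ 2) := by
    rw [integral_sub (((iiL1.add (iiPQ.const_mul _)).add (iiIBP.const_mul _)).sub
        (iidh2.const_mul _)) (iidh'2.const_mul _),
      integral_sub ((iiL1.add (iiPQ.const_mul _)).add (iiIBP.const_mul _))
        (iidh2.const_mul _),
      integral_add (iiL1.add (iiPQ.const_mul _)) (iiIBP.const_mul _),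
      integral_add iiL1 (iiPQ.const_mul _),
      intervalIntegral.integral_const_mul, intervalIntegral.integral_const_mul, intervalIntegral.integral_const_mul, intervalIntegral.integral_const_mul]
  rw [hexp, hL1int, hIBP] at hint
  -- difference of integrals
  have hfzc : ContinuousOn (fun x => f (zd x) (z x) x) (Icc 0 1) :=
    hcF.comp_continuousOn (hzdc.prodMk (hzc.prodMk continuousOn_id))
  have hfyc : ContinuousOn (fun x => f (yd x) (y x) x) (Icc 0 1) :=
    hcF.comp_continuousOn hγc
  have hsub : (∫ x in (0:ℝ)..1, (f (zd x) (z x) x - f (yd x) (y x) x))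
      = (∫ x in (0:ℝ)..1, f (zd x) (z x) x) - ∫ x in (0:ℝ)..1, f (yd x) (y x) x :=
    integral_sub (contOn_ii hI01 hfzc) (contOn_ii hI01 hfyc)
  rw [hsub] at hint
  have m1 : δ/8 * (∫ x in (0:ℝ)..1, dh x ^ 2) ≤ δ/8 * J :=
    mul_le_mul_of_nonneg_left hPoi (by linarith)
  have m2 : 0 < δ * J := mul_pos hδ0 hIpos
  linarith [hint, hjb, m1, m2]
end

section
/- Let P ∈ C¹, Q ∈ C⁰ on [0,1] with P(x) ≥ α > 0, and suppose there is a strictly positive C² solution u of (Pu')' = Qu on [0,1]. Then for every a ∈ (0,1], the only solution v of (Pv')' = Qv with v(0) = v(a) = 0 is v ≡ 0 on [0,a]. -/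
open Set

/-- A function with zero derivative (within) on a convex set is constant there. -/
lemma const_of_hasDerivAt_zero {s : Set ℝ} (hs : Convex ℝ s) {f : ℝ → ℝ}
    (hf : ∀ x ∈ s, HasDerivWithinAt f 0 s x) {x y : ℝ} (hx : x ∈ s) (hy : y ∈ s) :
    f x = f y := by
  have := hs.norm_image_sub_le_of_norm_hasDerivWithin_le (C := 0) (f' := fun _ => (0:ℝ))
    hf (fun z _ => by simp) hy hx
  simp only [zero_mul] at this
  have h0 : ‖f x - f y‖ = 0 := le_antisymm this (norm_nonneg _)
  have := norm_eq_zero.mp h0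
  linarith [sub_eq_zero.mp this]

/-- (C1) ⟹ (C4), disconjugacy: if `(P u')' = Q u` has a strictly positive C² solution
on `[0,1]`, then for every `a ∈ (0,1]` the only solution `v` of `(P v')' = Q v` with
`v(0) = v(a) = 0` is identically zero on `[0,a]`. -/
theorem disconjugate_of_positive_solution
    (α : ℝ) (hα : 0 < α) (P Q : ℝ → ℝ)
    (hP : ContDiffOn ℝ 1 P (Icc 0 1))
    (hPα : ∀ x ∈ Icc (0:ℝ) 1, α ≤ P x)
    (hQ : ContinuousOn Q (Icc 0 1))
    (u u' : ℝ → ℝ)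
    (hu : ∀ x ∈ Icc (0:ℝ) 1, HasDerivAt u (u' x) x)
    (hu'C1 : ContDiffOn ℝ 1 u' (Icc 0 1))
    (hode : ∀ x ∈ Icc (0:ℝ) 1, HasDerivAt (fun y => P y * u' y) (Q x * u x) x)
    (hupos : ∀ x ∈ Icc (0:ℝ) 1, 0 < u x) :
    ∀ a ∈ Ioc (0:ℝ) 1, ∀ v v' : ℝ → ℝ,
      (∀ x ∈ Icc (0:ℝ) a, HasDerivAt v (v' x) x) →
      (∀ x ∈ Icc (0:ℝ) a, HasDerivAt (fun y => P y * v' y) (Q x * v x) x) →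
      v 0 = 0 → v a = 0 →
      ∀ x ∈ Icc (0:ℝ) a, v x = 0 := by
  rintro a ⟨ha0, ha1⟩ v v' hv hvode hv0 hva
  have hsub : Icc (0:ℝ) a ⊆ Icc 0 1 := Icc_subset_Icc le_rfl ha1
  have hPpos : ∀ x ∈ Icc (0:ℝ) a, 0 < P x := fun x hx => lt_of_lt_of_le hα (hPα x (hsub hx))
  have hupos' : ∀ x ∈ Icc (0:ℝ) a, 0 < u x := fun x hx => hupos x (hsub hx)
  -- Wronskian
  set W : ℝ → ℝ := fun x => u x * (P x * v' x) - v x * (P x * u' x) with hWdef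
  have hW : ∀ x ∈ Icc (0:ℝ) a, HasDerivAt W 0 x := by
    intro x hx
    have h := ((hu x (hsub hx)).mul (hvode x hx)).sub ((hv x hx).mul (hode x (hsub hx)))
    have heq : u' x * (P x * v' x) + u x * (Q x * v x) -
        (v' x * (P x * u' x) + v x * (Q x * u x)) = 0 := by ring
    rwa [heq] at h
  have hWconst : ∀ x ∈ Icc (0:ℝ) a, W x = W 0 := by
    intro x hx
    exact const_of_hasDerivAt_zero (convex_Icc 0 a)
      (fun z hz => (hW z hz).hasDerivWithinAt) hx (left_mem_Icc.mpr ha0.le)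
  -- the ratio g = v / u
  set g : ℝ → ℝ := fun x => v x / u x with hgdef
  have hg : ∀ x ∈ Icc (0:ℝ) a, HasDerivAt g
      ((v' x * u x - v x * u' x) / u x ^ 2) x := by
    intro x hx
    exact (hv x hx).div (hu x (hsub hx)) (hupos' x hx).ne'
  -- MVT shows W 0 = 0
  have hgc : ContinuousOn g (Icc 0 a) := fun x hx => ((hg x hx).continuousAt).continuousWithinAt
  obtain ⟨ξ, hξ, hξeq⟩ := exists_hasDerivAt_eq_slope g _ ha0 hgc
    (fun x hx => hg x (Ioo_subset_Icc_self hx))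
  have hξI : ξ ∈ Icc (0:ℝ) a := Ioo_subset_Icc_self hξ
  have hgξ0 : (v' ξ * u ξ - v ξ * u' ξ) / u ξ ^ 2 = 0 := by
    rw [hξeq]; simp [hgdef, hv0, hva]
  have hnum : v' ξ * u ξ - v ξ * u' ξ = 0 := by
    have hu2 : u ξ ^ 2 ≠ 0 := pow_ne_zero _ (hupos' ξ hξI).ne'
    rcases div_eq_zero_iff.mp hgξ0 with h | h
    · exact h
    · exact absurd h hu2
  have hW0 : W 0 = 0 := by
    rw [← hWconst ξ hξI]
    have : W ξ = P ξ * (v' ξ * u ξ - v ξ * u' ξ) := by rw [hWdef]; ring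
    rw [this, hnum, mul_zero]
  -- hence W ≡ 0, so g' ≡ 0 on Icc 0 a
  have hgzero : ∀ x ∈ Icc (0:ℝ) a, (v' x * u x - v x * u' x) / u x ^ 2 = 0 := by
    intro x hx
    have hWx : W x = 0 := (hWconst x hx).trans hW0
    have hPx := (hPpos x hx).ne'
    have : v' x * u x - v x * u' x = 0 := by
      have : P x * (v' x * u x - v x * u' x) = 0 := by
        have hWe : W x = P x * (v' x * u x - v x * u' x) := by rw [hWdef]; ring
        rw [← hWe]; exact hWx
      rcases mul_eq_zero.mp this with h | h
      · exact absurd h hPx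
      · exact h
    rw [this, zero_div]
  have hgconst : ∀ x ∈ Icc (0:ℝ) a, g x = g 0 := by
    intro x hx
    refine const_of_hasDerivAt_zero (convex_Icc 0 a) (fun z hz => ?_) hx
      (left_mem_Icc.mpr ha0.le)
    have h := (hg z hz).hasDerivWithinAt (s := Icc 0 a)
    rwa [hgzero z hz] at h
  intro x hx
  have hg0 : g 0 = 0 := by simp [hgdef, hv0]
  have : v x / u x = 0 := (hgconst x hx).trans hg0
  rcases div_eq_zero_iff.mp this with h | h
  · exact h
  · exact absurd h (hupos' x hx).ne'
end
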